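/- arXiv:2512.11238 — 8 statements merged into one kernel-verified Lean document; each statement's English description precedes it below -/
import Mathlib

section
/- Fix n ≥ 2. Let (A_{n−1}, B_{n−1}) be an [(n−1)/(n−1)] Padé pair and (A_{n−2}, B_{n−2}) an [(n−2)/(n−2)] Padé pair for the same series, and assume e^{(n−1)}_{2n−1} − c_{2n−1} ≠ 0 and e^{(n−2)}_{2n−3} − c_{2n−3} ≠ 0. Define α_n = −(e^{(n−1)}_{2n−1} − c_{2n−1})/(e^{(n−2)}_{2n−3} − c_{2n−3}) and β_n = (b^{(n−1)}_1·c_{2n−1} + c_{2n} − e^{(n−1)}_{2n} + α_n·(c_{2n−2} + b^{(n−2)}_1·c_{2n−3} − e^{(n−2)}_{2n−2}))/(e^{(n−1)}_{2n−1} − c_{2n−1}). Then A_n := (1 + β_n x)·A_{n−1} + α_n x²·A_{n−2} and B_n := (1 + β_n x)·B_{n−1} + α_n x²·B_{n−2} form an [n/n] Padé pair for the series (the Jacobi formula for univariate diagonal Padé approximants). -/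
open Polynomial

/-- The truncation `C_N(x) = ∑_{k=0}^{N} c_k x^k` of the series with coefficients `c`. -/
noncomputable def seriesTrunc {K : Type*} [Field K] (c : ℕ → K) (N : ℕ) : Polynomial K :=
  ∑ k ∈ Finset.range (N + 1), Polynomial.C (c k) * Polynomial.X ^ k

/-- `(A, B)` is an `[n/n]` Padé pair for the series with coefficients `c`. -/
def IsPadePair {K : Type*} [Field K] (c : ℕ → K) (n : ℕ) (A B : Polynomial K) : Prop :=
  A.natDegree ≤ n ∧ B.natDegree ≤ n ∧ A.coeff 0 = 0 ∧ B.coeff 0 = 1 ∧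
    ∀ j ≤ 2 * n, (A - B * seriesTrunc c (2 * n)).coeff j = 0

lemma seriesTrunc_succ {K : Type*} [Field K] (c : ℕ → K) (N : ℕ) :
    seriesTrunc c (N + 1) = seriesTrunc c N + Polynomial.C (c (N + 1)) * Polynomial.X ^ (N + 1) := by
  simp [seriesTrunc, Finset.sum_range_succ]

/-- **Jacobi formula for univariate diagonal Padé approximants.** -/
theorem jacobi_formula {K : Type*} [Field K] [CharZero K]
    (c : ℕ → K) (hc0 : c 0 = 0) (n : ℕ) (hn : 2 ≤ n)
    (A1 B1 A2 B2 : Polynomial K)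
    (h1 : IsPadePair c (n - 1) A1 B1)
    (h2 : IsPadePair c (n - 2) A2 B2)
    (hd1 : (A1 - B1 * seriesTrunc c (2 * (n - 1))).coeff (2 * n - 1) - c (2 * n - 1) ≠ 0)
    (hd2 : (A2 - B2 * seriesTrunc c (2 * (n - 2))).coeff (2 * n - 3) - c (2 * n - 3) ≠ 0)
    (αn βn : K)
    (hα : αn =
      -(((A1 - B1 * seriesTrunc c (2 * (n - 1))).coeff (2 * n - 1) - c (2 * n - 1)) /
        ((A2 - B2 * seriesTrunc c (2 * (n - 2))).coeff (2 * n - 3) - c (2 * n - 3))))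
    (hβ : βn =
      (B1.coeff 1 * c (2 * n - 1) + c (2 * n)
          - (A1 - B1 * seriesTrunc c (2 * (n - 1))).coeff (2 * n)
          + αn * (c (2 * n - 2) + B2.coeff 1 * c (2 * n - 3)
            - (A2 - B2 * seriesTrunc c (2 * (n - 2))).coeff (2 * n - 2))) /
        ((A1 - B1 * seriesTrunc c (2 * (n - 1))).coeff (2 * n - 1) - c (2 * n - 1))) :
    IsPadePair c n
      ((1 + Polynomial.C βn * Polynomial.X) * A1 + Polynomial.C αn * Polynomial.X ^ 2 * A2)
      ((1 + Polynomial.C βn * Polynomial.X) * B1 + Polynomial.C αn * Polynomial.X ^ 2 * B2) := by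
  obtain ⟨p, rfl⟩ : ∃ p, n = p + 2 := ⟨n - 2, by omega⟩
  simp only [show p + 2 - 1 = p + 1 by omega, show p + 2 - 2 = p by omega,
    show 2 * (p + 2) - 1 = 2 * p + 3 by omega, show 2 * (p + 2) - 2 = 2 * p + 2 by omega,
    show 2 * (p + 2) - 3 = 2 * p + 1 by omega, show 2 * (p + 1) = 2 * p + 2 by omega,
    show 2 * (p + 2) = 2 * p + 4 by omega, show 2 * p + 4 - 1 = 2 * p + 3 by omega,
    show 2 * p + 4 - 2 = 2 * p + 2 by omega, show 2 * p + 4 - 3 = 2 * p + 1 by omega]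
    at h1 h2 hd1 hd2 hα hβ
  obtain ⟨hA1d, hB1d, hA10, hB10, hE1⟩ := h1
  obtain ⟨hA2d, hB2d, hA20, hB20, hE2⟩ := h2
  rw [show 2 * (p + 1) = 2 * p + 2 by omega] at hE1
  -- series splittings
  have hS2 : seriesTrunc c (2 * p + 2) = seriesTrunc c (2 * p)
      + Polynomial.C (c (2 * p + 1)) * Polynomial.X ^ (2 * p + 1)
      + Polynomial.C (c (2 * p + 2)) * Polynomial.X ^ (2 * p + 2) := by
    rw [show 2 * p + 2 = (2 * p + 1) + 1 by omega, seriesTrunc_succ, seriesTrunc_succ]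
    try ring
  have hS4 : seriesTrunc c (2 * p + 4) = seriesTrunc c (2 * p)
      + Polynomial.C (c (2 * p + 1)) * Polynomial.X ^ (2 * p + 1)
      + Polynomial.C (c (2 * p + 2)) * Polynomial.X ^ (2 * p + 2)
      + Polynomial.C (c (2 * p + 3)) * Polynomial.X ^ (2 * p + 3)
      + Polynomial.C (c (2 * p + 4)) * Polynomial.X ^ (2 * p + 4) := by
    rw [show 2 * p + 4 = (2 * p + 3) + 1 by omega, seriesTrunc_succ,
      show 2 * p + 3 = (2 * p + 2) + 1 by omega, seriesTrunc_succ,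
      show 2 * p + 2 = (2 * p + 1) + 1 by omega, seriesTrunc_succ, seriesTrunc_succ]
    try ring
  set e1 := (A1 - B1 * seriesTrunc c (2 * p + 2)).coeff (2 * p + 3) with he1
  set e1' := (A1 - B1 * seriesTrunc c (2 * p + 2)).coeff (2 * p + 4) with he1'
  set e2 := (A2 - B2 * seriesTrunc c (2 * p)).coeff (2 * p + 1) with he2
  set e2' := (A2 - B2 * seriesTrunc c (2 * p)).coeff (2 * p + 2) with he2'
  set b1 := B1.coeff 1 with hb1
  set b2 := B2.coeff 1 with hb2
  -- decompose E1
  have hdvd1 : Polynomial.X ^ (2 * p + 5) ∣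
      (A1 - B1 * seriesTrunc c (2 * p + 2) - Polynomial.C e1 * Polynomial.X ^ (2 * p + 3)
        - Polynomial.C e1' * Polynomial.X ^ (2 * p + 4)) := by
    rw [Polynomial.X_pow_dvd_iff]
    intro d hd
    rw [Polynomial.coeff_sub, Polynomial.coeff_sub, Polynomial.coeff_C_mul,
      Polynomial.coeff_C_mul, Polynomial.coeff_X_pow, Polynomial.coeff_X_pow]
    rcases (show d ≤ 2 * p + 2 ∨ d = 2 * p + 3 ∨ d = 2 * p + 4 by omega) with h | h | h
    · rw [if_neg (by omega), if_neg (by omega), hE1 d (by omega)]; ring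
    · subst h; rw [if_pos rfl, if_neg (by omega), ← he1]; ring
    · subst h; rw [if_neg (by omega), if_pos rfl, ← he1']; ring
  obtain ⟨F1, hF1⟩ := hdvd1
  have hA1 : A1 = Polynomial.C e1 * Polynomial.X ^ (2 * p + 3)
      + Polynomial.C e1' * Polynomial.X ^ (2 * p + 4)
      + Polynomial.X ^ (2 * p + 5) * F1 + B1 * seriesTrunc c (2 * p + 2) := by
    linear_combination hF1
  -- decompose E2
  have hdvd2 : Polynomial.X ^ (2 * p + 3) ∣
      (A2 - B2 * seriesTrunc c (2 * p) - Polynomial.C e2 * Polynomial.X ^ (2 * p + 1)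
        - Polynomial.C e2' * Polynomial.X ^ (2 * p + 2)) := by
    rw [Polynomial.X_pow_dvd_iff]
    intro d hd
    rw [Polynomial.coeff_sub, Polynomial.coeff_sub, Polynomial.coeff_C_mul,
      Polynomial.coeff_C_mul, Polynomial.coeff_X_pow, Polynomial.coeff_X_pow]
    rcases (show d ≤ 2 * p ∨ d = 2 * p + 1 ∨ d = 2 * p + 2 by omega) with h | h | h
    · rw [if_neg (by omega), if_neg (by omega), hE2 d (by omega)]; ring
    · subst h; rw [if_pos rfl, if_neg (by omega), ← he2]; ring
    · subst h; rw [if_neg (by omega), if_pos rfl, ← he2']; ring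
  obtain ⟨F2, hF2⟩ := hdvd2
  have hA2 : A2 = Polynomial.C e2 * Polynomial.X ^ (2 * p + 1)
      + Polynomial.C e2' * Polynomial.X ^ (2 * p + 2)
      + Polynomial.X ^ (2 * p + 3) * F2 + B2 * seriesTrunc c (2 * p) := by
    linear_combination hF2
  -- decompose B1, B2
  have hdvdB1 : Polynomial.X ^ 2 ∣ (B1 - 1 - Polynomial.C b1 * Polynomial.X) := by
    rw [Polynomial.X_pow_dvd_iff]
    intro d hd
    interval_cases d
    · simp [hB10]
    · simp [← hb1, Polynomial.coeff_one]
  obtain ⟨G1, hG1⟩ := hdvdB1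
  have hB1e : B1 = 1 + Polynomial.C b1 * Polynomial.X + Polynomial.X ^ 2 * G1 := by
    linear_combination hG1
  have hdvdB2 : Polynomial.X ^ 2 ∣ (B2 - 1 - Polynomial.C b2 * Polynomial.X) := by
    rw [Polynomial.X_pow_dvd_iff]
    intro d hd
    interval_cases d
    · simp [hB20]
    · simp [← hb2, Polynomial.coeff_one]
  obtain ⟨G2, hG2⟩ := hdvdB2
  have hB2e : B2 = 1 + Polynomial.C b2 * Polynomial.X + Polynomial.X ^ 2 * G2 := by
    linear_combination hG2
  -- scalar identities
  have hu : e1 + αn * e2 - c (2 * p + 3) - αn * c (2 * p + 1) = 0 := by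
    rw [hα]; field_simp; ring
  have hv : e1' + βn * e1 + αn * e2' - c (2 * p + 4) - (βn + b1) * c (2 * p + 3)
      - αn * c (2 * p + 2) - αn * b2 * c (2 * p + 1) = 0 := by
    rw [hβ]; field_simp; ring
  -- the key polynomial identity
  have key : (1 + Polynomial.C βn * Polynomial.X) * A1 + Polynomial.C αn * Polynomial.X ^ 2 * A2
      - ((1 + Polynomial.C βn * Polynomial.X) * B1 + Polynomial.C αn * Polynomial.X ^ 2 * B2)
        * seriesTrunc c (2 * p + 4)
      = Polynomial.C (e1 + αn * e2 - c (2 * p + 3) - αn * c (2 * p + 1)) * Polynomial.X ^ (2 * p + 3)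
      + Polynomial.C (e1' + βn * e1 + αn * e2' - c (2 * p + 4) - (βn + b1) * c (2 * p + 3)
          - αn * c (2 * p + 2) - αn * b2 * c (2 * p + 1)) * Polynomial.X ^ (2 * p + 4)
      + Polynomial.X ^ (2 * p + 5) *
        (F1 - Polynomial.C (c (2 * p + 4)) * Polynomial.X * G1
          - Polynomial.C (c (2 * p + 3)) * G1 - Polynomial.C b1 * Polynomial.C (c (2 * p + 4))
          + Polynomial.C βn * Polynomial.X * F1 + Polynomial.C βn * Polynomial.C e1'
          - Polynomial.C βn * Polynomial.C (c (2 * p + 4))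
          - Polynomial.C βn * Polynomial.C (c (2 * p + 4)) * Polynomial.X ^ 2 * G1
          - Polynomial.C βn * Polynomial.C (c (2 * p + 3)) * Polynomial.X * G1
          - Polynomial.C βn * Polynomial.C b1 * Polynomial.C (c (2 * p + 4)) * Polynomial.X
          - Polynomial.C βn * Polynomial.C b1 * Polynomial.C (c (2 * p + 3))
          + Polynomial.C αn * F2 - Polynomial.C αn * Polynomial.C (c (2 * p + 4)) * Polynomial.X
          - Polynomial.C αn * Polynomial.C (c (2 * p + 4)) * Polynomial.X ^ 3 * G2
          - Polynomial.C αn * Polynomial.C (c (2 * p + 3))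
          - Polynomial.C αn * Polynomial.C (c (2 * p + 3)) * Polynomial.X ^ 2 * G2
          - Polynomial.C αn * Polynomial.C (c (2 * p + 2)) * Polynomial.X * G2
          - Polynomial.C αn * Polynomial.C (c (2 * p + 1)) * G2
          - Polynomial.C αn * Polynomial.C b2 * Polynomial.C (c (2 * p + 4)) * Polynomial.X ^ 2
          - Polynomial.C αn * Polynomial.C b2 * Polynomial.C (c (2 * p + 3)) * Polynomial.X
          - Polynomial.C αn * Polynomial.C b2 * Polynomial.C (c (2 * p + 2))) := by
    rw [hA1, hA2, hS4, hS2, hB1e, hB2e]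
    simp only [map_add, map_sub, map_mul]
    ring
  have key2 : Polynomial.X ^ (2 * p + 5) ∣
      ((1 + Polynomial.C βn * Polynomial.X) * A1 + Polynomial.C αn * Polynomial.X ^ 2 * A2
      - ((1 + Polynomial.C βn * Polynomial.X) * B1 + Polynomial.C αn * Polynomial.X ^ 2 * B2)
        * seriesTrunc c (2 * p + 4)) := by
    rw [key, hu, hv]
    simp only [Polynomial.C_0, zero_mul, zero_add]
    exact dvd_mul_right _ _
  refine ⟨?_, ?_, ?_, ?_, ?_⟩
  · refine le_trans (Polynomial.natDegree_add_le _ _) (max_le ?_ ?_)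
    · refine le_trans (Polynomial.natDegree_mul_le) ?_
      have h1' : (1 + Polynomial.C βn * Polynomial.X).natDegree ≤ 1 := by compute_degree
      omega
    · refine le_trans (Polynomial.natDegree_mul_le) ?_
      have h1' : (Polynomial.C αn * Polynomial.X ^ 2).natDegree ≤ 2 := by compute_degree
      omega
  · refine le_trans (Polynomial.natDegree_add_le _ _) (max_le ?_ ?_)
    · refine le_trans (Polynomial.natDegree_mul_le) ?_
      have h1' : (1 + Polynomial.C βn * Polynomial.X).natDegree ≤ 1 := by compute_degree
      omega
    · refine le_trans (Polynomial.natDegree_mul_le) ?_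
      have h1' : (Polynomial.C αn * Polynomial.X ^ 2).natDegree ≤ 2 := by compute_degree
      omega
  · simp [Polynomial.mul_coeff_zero, hA10]
  · simp [Polynomial.mul_coeff_zero, hB10]
  · intro j hj
    rw [show 2 * (p + 2) = 2 * p + 4 by omega] at hj ⊢
    exact Polynomial.X_pow_dvd_iff.mp key2 j (by omega)
end

section
/- Fix m ≥ 1 and n ≥ 1. Suppose for each 0 ≤ p ≤ m the polynomials A_{k,p}, B_{k,p} (0 ≤ k ≤ n−1) form a level-p Padé family up to order n−1 (with A_{−1,p} := 0 and B_{−1,p} := 0 when n = 1), that c_{1,0} ≠ 0, and that there exist scalars α_n, β_n ∈ K such that A_{n,0} := (1+β_n x)A_{n−1,0} + α_n x² A_{n−2,0} and B_{n,0} := (1+β_n x)B_{n−1,0} + α_n x² B_{n−2,0} extend the level-0 family to order n; assume moreover the nondegeneracy conditions that the x^{2n−1}-coefficient of E_{n−1,0} differs from c_{2n−1,0} and the x^{2n−3}-coefficient of E_{n−2,0} differs from c_{2n−3,0}. Then there exist scalars β̌^{n,q}_0, α̌^{n,q}_0 ∈ K for q = 1,…,m such that, setting β̌^{n,q}_p :=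 β̌^{n,q−p}_0 and α̌^{n,q}_p := α̌^{n,q−p}_0 for 1 ≤ p ≤ q−1 and β̌^{n,q}_p, α̌^{n,q}_p as given for p = 0, the polynomials A_{n,q} := (1+β_n x)A_{n−1,q} + α_n x² A_{n−2,q} + Σ_{p=0}^{q−1} ( x·β̌^{n,q}_p·A_{n−1,p} + x²·α̌^{n,q}_p·A_{n−2,p} ) and B_{n,q} := (1+β_n x)B_{n−1,q} + α_n x² B_{n−2,q} + Σ_{p=0}^{q−1} ( x·β̌^{n,q}_p·B_{n−1,p} + x²·α̌^{n,q}_p·B_{n−2,p} ) have degree at most n, satisfy B_{n,q}(0) = b_{0,q}, and the error E_{n,q} := A_{n,q} − Σ_{s=0}^{q} B_{n,s}·C_{2n,q−s} has zero coefficients in all degrees 0,…,2n, for every q = 1,…,m. (This is the bivariate Jacobi-type recursion of the paper's Proposition, including the copy identities for the correction coefficients.) -/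
open Polynomial

/-- `C_{N,k}(x) = ∑_{i=0}^{N} c_{i,k} x^i`, truncation in `x` of the bivariate series. -/
noncomputable def truncBiv {K : Type*} [Field K] (c : ℕ → ℕ → K) (N k : ℕ) : Polynomial K :=
  ∑ i ∈ Finset.range (N + 1), Polynomial.C (c i k) * Polynomial.X ^ i

/-- Coefficient of a polynomial at an integer index (zero for negative indices). -/
noncomputable def coeffZ {K : Type*} [Field K] (p : Polynomial K) (j : ℤ) : K :=
  if 0 ≤ j then p.coeff j.toNat else 0

/-- Bivariate series coefficient at an integer first index (zero for negative indices). -/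
noncomputable def cZ {K : Type*} [Field K] (c : ℕ → ℕ → K) (i : ℤ) (j : ℕ) : K :=
  if 0 ≤ i then c i.toNat j else 0

/-- A level-`p` Padé family up to order `N` (with seeds `b`): for each `0 ≤ k ≤ N`,
`A_{k,p}`, `B_{k,p}` have degree at most `k`, `B_{k,p}(0) = b_{0,p}`, and the error
`E_{k,p} = A_{k,p} - ∑_{s=0}^{p} B_{k,s} C_{2k,p-s}` vanishes in degrees `0,…,2k`. -/
def IsLevelFamily {K : Type*} [Field K] (c : ℕ → ℕ → K) (b : ℕ → K)
    (A B : ℤ → ℕ → Polynomial K) (p N : ℕ) : Prop :=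
  ∀ k : ℕ, k ≤ N →
    (A k p).natDegree ≤ k ∧ (B k p).natDegree ≤ k ∧ (B k p).coeff 0 = b p ∧
      ∀ j ≤ 2 * k,
        ((A k p) - ∑ s ∈ Finset.range (p + 1),
            (B k s) * truncBiv c (2 * k) (p - s)).coeff j = 0

/-- The order-`n` polynomial produced by the bivariate Jacobi-type recursion at level `r`:
`(1+β_n x)·A_{n-1,r} + α_n x²·A_{n-2,r}
  + ∑_{p=0}^{r-1} ( x·β̌^{n,r}_p·A_{n-1,p} + x²·α̌^{n,r}_p·A_{n-2,p} )`,
where the copy identities `β̌^{n,r}_p = β̌^{n,r-p}_0` and `α̌^{n,r}_p = α̌^{n,r-p}_0`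
are built in (so `βc q` stands for `β̌^{n,q}_0` and `αc q` for `α̌^{n,q}_0`). -/
noncomputable def extPoly {K : Type*} [Field K] (A : ℤ → ℕ → Polynomial K) (n : ℕ)
    (αn βn : K) (βc αc : ℕ → K) (r : ℕ) : Polynomial K :=
  (1 + Polynomial.C βn * Polynomial.X) * A ((n : ℤ) - 1) r
    + Polynomial.C αn * Polynomial.X ^ 2 * A ((n : ℤ) - 2) r
    + ∑ p ∈ Finset.range r,
        (Polynomial.X * Polynomial.C (βc (r - p)) * A ((n : ℤ) - 1) p
          + Polynomial.X ^ 2 * Polynomial.C (αc (r - p)) * A ((n : ℤ) - 2) p)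

/-!
The error of the recursion is the same recursion applied to the errors of the families of
orders `n - 1` and `n - 2`, all truncated at `2n`: the recursion is a convolution in the level
index, and so is multiplication by the bivariate series. These errors vanish through degrees
`2n - 2` and `2n - 4`, so the new error vanishes through degree `2n - 2` whatever the correction
coefficients are. At level `q` its coefficients of degree `2n - 1` and `2n` are affine in
`(β̌^{n,q}_0, α̌^{n,q}_0)`, through a triangular system whose diagonal entries are the top error
coefficients that the nondegeneracy conditions make nonzero; the remaining terms involve only
correction coefficients of lower levels, so the system is solved level by level.
-/

open Function

theorem exists_forall_of_update_solvable {α β : Type*} [Nonempty α] [Nonempty β]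
    (P : ℕ → (ℕ → α) → (ℕ → β) → Prop) (Q : ℕ)
    (hloc : ∀ r f g f' g', (∀ t ≤ r, f t = f' t ∧ g t = g' t) → P r f g → P r f' g')
    (hstep : ∀ r f g, 1 ≤ r → r ≤ Q → ∃ a b, P r (update f r a) (update g r b)) :
    ∃ f g, ∀ r, 1 ≤ r → r ≤ Q → P r f g := by
  induction Q with
  | zero =>
    exact ⟨fun _ => Classical.arbitrary α, fun _ => Classical.arbitrary β, by omega⟩
  | succ Q ih =>
    obtain ⟨f, g, hfg⟩ := ih fun r f g h1 h2 => hstep r f g h1 (by omega)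
    obtain ⟨a, b, hab⟩ := hstep (Q + 1) f g (by omega) le_rfl
    refine ⟨update f (Q + 1) a, update g (Q + 1) b, fun r h1 h2 => ?_⟩
    rcases h2.lt_or_eq with h2 | rfl
    · refine hloc r f g _ _ (fun t ht => ⟨?_, ?_⟩) (hfg r h1 (by omega)) <;>
        exact (update_of_ne (by omega) _ _).symm
    · exact hab

theorem sum_convolution_assoc {R : Type*} [CommSemiring R] (γ F T : ℕ → R) (r : ℕ) :
    ∑ s ∈ Finset.range (r + 1), (∑ p ∈ Finset.range s, γ (s - p) * F p) * T (r - s)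
      = ∑ p ∈ Finset.range r, γ (r - p) * ∑ u ∈ Finset.range (p + 1), F u * T (p - u) := by
  simp only [Finset.sum_mul, Finset.mul_sum]
  rw [Finset.sum_sigma', Finset.sum_sigma']
  refine Finset.sum_nbij' (fun x => ⟨r - x.1 + x.2, x.2⟩) (fun y => ⟨r - y.1 + y.2, y.2⟩)
    ?_ ?_ ?_ ?_ ?_
  all_goals
    rintro ⟨s, p⟩ h
    simp only [Finset.mem_sigma, Finset.mem_range] at h
  · simp only [Finset.mem_sigma, Finset.mem_range]; omega
  · simp only [Finset.mem_sigma, Finset.mem_range]; omega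
  · ext <;> simp; omega
  · ext <;> simp; omega
  · rw [show r - (r - s + p) = s - p by omega, show r - s + p - p = r - s by omega, mul_assoc]

section Pade

variable {K : Type*} [Field K] (c : ℕ → ℕ → K)

noncomputable def padeError (A B : ℕ → K[X]) (N p : ℕ) : K[X] :=
  A p - ∑ s ∈ Finset.range (p + 1), B s * truncBiv c N (p - s)

def IsPadeAt (b : ℕ → K) (A B : ℕ → K[X]) (k p : ℕ) : Prop :=
  (A p).natDegree ≤ k ∧ (B p).natDegree ≤ k ∧ (B p).coeff 0 = b p ∧
    ∀ j ≤ 2 * k, (padeError c A B (2 * k) p).coeff j = 0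

theorem IsLevelFamily.isPadeAt {b : ℕ → K} {A B : ℤ → ℕ → K[X]} {p N k : ℕ}
    (h : IsLevelFamily c b A B p N) (hk : k ≤ N) : IsPadeAt c b (A k) (B k) k p :=
  h k hk

theorem IsPadeAt.congr {b : ℕ → K} {A B A' B' : ℕ → K[X]} {k r : ℕ}
    (hA : A r = A' r) (hB : ∀ s ≤ r, B s = B' s) (h : IsPadeAt c b A B k r) :
    IsPadeAt c b A' B' k r := by
  have hE : padeError c A B (2 * k) r = padeError c A' B' (2 * k) r := by
    unfold padeError
    rw [hA, Finset.sum_congr rfl fun s hs => by rw [hB s (Finset.mem_range_succ_iff.mp hs)]]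
  unfold IsPadeAt at h ⊢
  rwa [← hA, ← hB r le_rfl, ← hE]

theorem X_pow_dvd_truncBiv_sub {M N : ℕ} (h : M ≤ N) (j : ℕ) :
    X ^ (M + 1) ∣ truncBiv c N j - truncBiv c M j := by
  rw [truncBiv, truncBiv, ← Finset.sum_Ico_eq_sub _ (by omega)]
  exact Finset.dvd_sum fun i hi =>
    dvd_mul_of_dvd_right (pow_dvd_pow X (Finset.mem_Ico.mp hi).1) _

theorem X_pow_dvd_padeError_sub (A B : ℕ → K[X]) {M N : ℕ} (h : M ≤ N) (p : ℕ) :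
    X ^ (M + 1) ∣ padeError c A B N p - padeError c A B M p := by
  have hE : padeError c A B N p - padeError c A B M p
      = -∑ s ∈ Finset.range (p + 1), B s * (truncBiv c N (p - s) - truncBiv c M (p - s)) := by
    simp only [padeError, mul_sub, Finset.sum_sub_distrib]
    abel
  rw [hE, dvd_neg]
  exact Finset.dvd_sum fun s _ => dvd_mul_of_dvd_right (X_pow_dvd_truncBiv_sub c h _) _

theorem IsPadeAt.X_pow_dvd_padeError {b : ℕ → K} {A B : ℕ → K[X]} {k p : ℕ}
    (h : IsPadeAt c b A B k p) {N : ℕ} (hN : 2 * k ≤ N) :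
    X ^ (2 * k + 1) ∣ padeError c A B N p := by
  have h2k : X ^ (2 * k + 1) ∣ padeError c A B (2 * k) p :=
    X_pow_dvd_iff.mpr fun j hj => h.2.2.2 j (by omega)
  simpa using dvd_add h2k (X_pow_dvd_padeError_sub c A B hN p)

theorem coeff_padeError_zero_succ (A B : ℕ → K[X]) {M N : ℕ} (h : M < N) :
    (padeError c A B N 0).coeff (M + 1)
      = (A 0 - B 0 * truncBiv c M 0).coeff (M + 1) - c (M + 1) 0 * (B 0).coeff 0 := by
  have hN : (padeError c A B N 0).coeff (M + 1) = (padeError c A B (M + 1) 0).coeff (M + 1) :=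
    sub_eq_zero.mp <| by
      rw [← coeff_sub]; exact X_pow_dvd_iff.mp (X_pow_dvd_padeError_sub c A B h 0) _ (by omega)
  have hM : padeError c A B (M + 1) 0
      = A 0 - B 0 * truncBiv c M 0 - C (c (M + 1) 0) * B 0 * X ^ (M + 1) := by
    simp only [padeError, truncBiv, zero_add, Finset.sum_range_one, Nat.sub_zero,
      Finset.sum_range_succ _ (M + 1)]
    ring
  rw [hN, hM, coeff_sub, coeff_mul_X_pow', if_pos le_rfl, Nat.sub_self, coeff_C_mul]

theorem coeff_padeError_zero_succ_ne_zero {A B : ℕ → K[X]} {M N : ℕ} (h : M < N)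
    (hB : (B 0).coeff 0 = 1) (hM : (A 0 - B 0 * truncBiv c M 0).coeff (M + 1) ≠ c (M + 1) 0) :
    (padeError c A B N 0).coeff (M + 1) ≠ 0 := by
  rw [coeff_padeError_zero_succ c A B h, hB, mul_one]
  exact sub_ne_zero.mpr hM

end Pade

section Recursion

variable {K : Type*} [Field K] {n : ℕ} {αn βn : K} {βc αc : ℕ → K}

theorem extPoly_congr (A : ℤ → ℕ → K[X]) {βc' αc' : ℕ → K} {r : ℕ}
    (h : ∀ t ≤ r, βc t = βc' t ∧ αc t = αc' t) :
    extPoly A n αn βn βc αc r = extPoly A n αn βn βc' αc' r := by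
  unfold extPoly
  congr 1
  refine Finset.sum_congr rfl fun p _ => ?_
  obtain ⟨h1, h2⟩ := h (r - p) (Nat.sub_le r p)
  rw [h1, h2]

theorem extPoly_update_self (A : ℤ → ℕ → K[X]) {r : ℕ} (hr : 1 ≤ r) (u v : K) :
    extPoly A n αn βn (update βc r u) (update αc r v) r
      = extPoly A n αn βn (update βc r 0) (update αc r 0) r
        + C u * (X * A ((n : ℤ) - 1) 0) + C v * (X ^ 2 * A ((n : ℤ) - 2) 0) := by
  obtain ⟨r, rfl⟩ : ∃ r', r = r' + 1 := ⟨r - 1, by omega⟩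
  simp (disch := omega) only [extPoly, Finset.sum_range_succ', Nat.sub_zero,
    update_self, update_of_ne, map_zero]
  ring

theorem natDegree_extPoly_le (A : ℤ → ℕ → K[X]) {r d : ℕ}
    (h1 : ∀ p ≤ r, (A ((n : ℤ) - 1) p).natDegree ≤ d + 1)
    (h2 : ∀ p ≤ r, (A ((n : ℤ) - 2) p).natDegree ≤ d) :
    (extPoly A n αn βn βc αc r).natDegree ≤ d + 2 := by
  have hp : ∀ p ∈ Finset.range r, p ≤ r := fun p hp => (Finset.mem_range.mp hp).le
  refine natDegree_add_le_of_degree_le (natDegree_add_le_of_degree_le ?_ ?_)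
    (natDegree_sum_le_of_forall_le _ _ fun p hp' => natDegree_add_le_of_degree_le ?_ ?_)
  · exact (natDegree_mul_le_of_le (by compute_degree) (h1 r le_rfl)).trans (by omega)
  · exact (natDegree_mul_le_of_le (by compute_degree) (h2 r le_rfl)).trans (by omega)
  · exact (natDegree_mul_le_of_le (by compute_degree) (h1 p (hp p hp'))).trans (by omega)
  · exact (natDegree_mul_le_of_le (by compute_degree) (h2 p (hp p hp'))).trans (by omega)

theorem coeff_zero_extPoly (A : ℤ → ℕ → K[X]) (r : ℕ) :
    (extPoly A n αn βn βc αc r).coeff 0 = (A ((n : ℤ) - 1) r).coeff 0 := by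
  simp [extPoly, coeff_zero_eq_eval_zero, eval_finsetSum]

theorem X_pow_dvd_extPoly (A : ℤ → ℕ → K[X]) {r d : ℕ}
    (h1 : ∀ p ≤ r, X ^ (d + 2) ∣ A ((n : ℤ) - 1) p)
    (h2 : ∀ p ≤ r, X ^ d ∣ A ((n : ℤ) - 2) p) :
    X ^ (d + 2) ∣ extPoly A n αn βn βc αc r := by
  have hX : (X : K[X]) ^ (d + 2) = X ^ 2 * X ^ d := by ring
  have hp : ∀ p ∈ Finset.range r, p ≤ r := fun p hp => (Finset.mem_range.mp hp).le
  refine dvd_add (dvd_add (dvd_mul_of_dvd_right (h1 r le_rfl) _) ?_)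
    (Finset.dvd_sum fun p hp' => dvd_add (dvd_mul_of_dvd_right (h1 p (hp p hp')) _) ?_)
  · rw [hX]; exact mul_dvd_mul (dvd_mul_left _ _) (h2 r le_rfl)
  · rw [hX]; exact mul_dvd_mul (dvd_mul_right _ _) (h2 p (hp p hp'))

theorem padeError_extPoly (c : ℕ → ℕ → K) (A B : ℤ → ℕ → K[X]) (N r : ℕ) :
    padeError c (extPoly A n αn βn βc αc) (extPoly B n αn βn βc αc) N r
      = extPoly (fun k => padeError c (A k) (B k) N) n αn βn βc αc r := by
  simp only [padeError, extPoly, add_mul, Finset.sum_add_distrib]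
  rw [sum_convolution_assoc (fun t => X * C (βc t)),
    sum_convolution_assoc (fun t => X ^ 2 * C (αc t))]
  simp only [mul_sub, Finset.mul_sum, Finset.sum_sub_distrib, mul_assoc]
  abel

end Recursion

theorem exists_X_pow_dvd_add_C_mul {K : Type*} [Field K] (e p q : K[X]) (d : ℕ)
    (he : X ^ (d + 2) ∣ e) (hp : X ^ (d + 2) ∣ p) (hp' : p.coeff (d + 2) ≠ 0)
    (hq : X ^ d ∣ q) (hq' : q.coeff d ≠ 0) :
    ∃ u v : K, X ^ (d + 4) ∣ e + C u * (X * p) + C v * (X ^ 2 * q) := by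
  have hlow : ∀ u v : K, X ^ (d + 2) ∣ e + C u * (X * p) + C v * (X ^ 2 * q) := fun u v =>
    dvd_add (dvd_add he (dvd_mul_of_dvd_right (dvd_mul_of_dvd_right hp _) _))
      (dvd_mul_of_dvd_right (by rw [add_comm, pow_add]; exact mul_dvd_mul_left _ hq) _)
  have hcoeff : ∀ (u v : K) (j : ℕ), (e + C u * (X * p) + C v * (X ^ 2 * q)).coeff (j + 2)
      = e.coeff (j + 2) + u * p.coeff (j + 1) + v * q.coeff j := by
    intro u v j
    rw [coeff_add, coeff_add, coeff_C_mul, coeff_C_mul, coeff_X_mul, coeff_X_pow_mul]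
  have hp0 : p.coeff (d + 1) = 0 := X_pow_dvd_iff.mp hp _ (by omega)
  obtain ⟨v, hv⟩ : ∃ v, e.coeff (d + 2) + v * q.coeff d = 0 :=
    ⟨-e.coeff (d + 2) / q.coeff d, by field_simp; ring⟩
  obtain ⟨u, hu⟩ : ∃ u, e.coeff (d + 1 + 2) + u * p.coeff (d + 2) + v * q.coeff (d + 1) = 0 :=
    ⟨-(e.coeff (d + 1 + 2) + v * q.coeff (d + 1)) / p.coeff (d + 2), by field_simp; ring⟩
  refine ⟨u, v, X_pow_dvd_iff.mpr fun j hj => ?_⟩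
  obtain hj | rfl | rfl : j < d + 2 ∨ j = d + 2 ∨ j = d + 1 + 2 := by omega
  · exact X_pow_dvd_iff.mp (hlow u v) j hj
  · rw [hcoeff, hp0, mul_zero, add_zero, hv]
  · rw [hcoeff, hu]

theorem exists_update_isPadeAt {K : Type*} [Field K] {c : ℕ → ℕ → K} {b : ℕ → K}
    {A B : ℤ → ℕ → K[X]} {k r : ℕ} {αn βn : K}
    (hfam : ∀ p ≤ r, IsLevelFamily c b A B p (k + 1)) (hr : 1 ≤ r)
    (hd1 : (padeError c (A (k + 1 : ℕ)) (B (k + 1 : ℕ)) (2 * (k + 2)) 0).coeff (2 * (k + 1) + 1)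
      ≠ 0)
    (hd2 : (padeError c (A k) (B k) (2 * (k + 2)) 0).coeff (2 * k + 1) ≠ 0)
    (βc αc : ℕ → K) :
    ∃ u v : K, IsPadeAt c b
      (extPoly A (k + 2) αn βn (update βc r u) (update αc r v))
      (extPoly B (k + 2) αn βn (update βc r u) (update αc r v)) (k + 2) r := by
  have i1 : ((k + 2 : ℕ) : ℤ) - 1 = ((k + 1 : ℕ) : ℤ) := by push_cast; ring
  have i2 : ((k + 2 : ℕ) : ℤ) - 2 = (k : ℤ) := by push_cast; ring
  set E : ℤ → ℕ → K[X] := fun i => padeError c (A i) (B i) (2 * (k + 2))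
  have hE1 : ∀ p ≤ r, X ^ (2 * k + 1 + 2) ∣ E (((k + 2 : ℕ) : ℤ) - 1) p := fun p hp => by
    rw [i1, show 2 * k + 1 + 2 = 2 * (k + 1) + 1 by ring]
    exact ((hfam p hp).isPadeAt c le_rfl).X_pow_dvd_padeError c (by omega)
  have hE2 : ∀ p ≤ r, X ^ (2 * k + 1) ∣ E (((k + 2 : ℕ) : ℤ) - 2) p := fun p hp => by
    rw [i2]
    exact ((hfam p hp).isPadeAt c (by omega)).X_pow_dvd_padeError c (by omega)
  obtain ⟨u, v, huv⟩ := exists_X_pow_dvd_add_C_mul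
    (extPoly E (k + 2) αn βn (update βc r 0) (update αc r 0) r)
    (E (((k + 2 : ℕ) : ℤ) - 1) 0) (E (((k + 2 : ℕ) : ℤ) - 2) 0) (2 * k + 1)
    (X_pow_dvd_extPoly E hE1 hE2) (hE1 0 (Nat.zero_le r))
    (by rw [i1]; convert hd1 using 2; ring) (hE2 0 (Nat.zero_le r)) (by rw [i2]; exact hd2)
  refine ⟨u, v, ?_, ?_, ?_, fun j hj => ?_⟩
  · exact natDegree_extPoly_le A (d := k)
      (fun p hp => by rw [i1]; exact ((hfam p hp).isPadeAt c le_rfl).1)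
      (fun p hp => by rw [i2]; exact ((hfam p hp).isPadeAt c (by omega)).1)
  · exact natDegree_extPoly_le B (d := k)
      (fun p hp => by rw [i1]; exact ((hfam p hp).isPadeAt c le_rfl).2.1)
      (fun p hp => by rw [i2]; exact ((hfam p hp).isPadeAt c (by omega)).2.1)
  · rw [coeff_zero_extPoly, i1]
    exact ((hfam r le_rfl).isPadeAt c le_rfl).2.2.1
  · rw [padeError_extPoly, extPoly_update_self _ hr]
    exact X_pow_dvd_iff.mp huv j (by omega)

theorem coeffZ_natCast {K : Type*} [Field K] (p : K[X]) (j : ℕ) : coeffZ p j = p.coeff j := by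
  simp [coeffZ]

theorem cZ_natCast {K : Type*} [Field K] (c : ℕ → ℕ → K) (i j : ℕ) :
    cZ c i j = c i j := by
  simp [cZ]

theorem bivariate_jacobi_general {K : Type*} [Field K]
    (c : ℕ → ℕ → K)
    (m n : ℕ)
    (b : ℕ → K) (hb0 : b 0 = 1)
    (A B : ℤ → ℕ → Polynomial K)
    (hfam : ∀ p ≤ m, IsLevelFamily c b A B p (n - 1))
    (αn βn : K)
    (hd1 : coeffZ (A ((n : ℤ) - 1) 0 - B ((n : ℤ) - 1) 0 * truncBiv c (2 * (n - 1)) 0)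
        (2 * (n : ℤ) - 1) ≠ cZ c (2 * (n : ℤ) - 1) 0)
    (hd2 : coeffZ (A ((n : ℤ) - 2) 0 - B ((n : ℤ) - 2) 0 * truncBiv c (2 * (n - 2)) 0)
        (2 * (n : ℤ) - 3) ≠ cZ c (2 * (n : ℤ) - 3) 0) :
    ∃ βc αc : ℕ → K,
      ∀ q, 1 ≤ q → q ≤ m →
        (extPoly A n αn βn βc αc q).natDegree ≤ n ∧
        (extPoly B n αn βn βc αc q).natDegree ≤ n ∧
        (extPoly B n αn βn βc αc q).coeff 0 = b q ∧
        ∀ j ≤ 2 * n,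
          (extPoly A n αn βn βc αc q
            - ∑ s ∈ Finset.range (q + 1),
                extPoly B n αn βn βc αc s * truncBiv c (2 * n) (q - s)).coeff j = 0 := by
  -- for `n ≤ 1` both sides of `hd2` are the junk value `0` at a negative index
  obtain ⟨k, rfl⟩ : ∃ k, n = k + 2 := ⟨n - 2, by
    by_contra hn
    exact hd2 (by rw [coeffZ, cZ, if_neg (by omega), if_neg (by omega)])⟩
  rw [show ((k + 2 : ℕ) : ℤ) - 1 = ((k + 1 : ℕ) : ℤ) by push_cast; ring,
    show 2 * ((k + 2 : ℕ) : ℤ) - 1 = ((2 * (k + 1) + 1 : ℕ) : ℤ) by push_cast; ring,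
    show k + 2 - 1 = k + 1 by omega, coeffZ_natCast, cZ_natCast] at hd1
  rw [show ((k + 2 : ℕ) : ℤ) - 2 = (k : ℤ) by push_cast; ring,
    show 2 * ((k + 2 : ℕ) : ℤ) - 3 = ((2 * k + 1 : ℕ) : ℤ) by push_cast; ring,
    show k + 2 - 2 = k by omega, coeffZ_natCast, cZ_natCast] at hd2
  have hB0 : ∀ i ≤ k + 1, (B i 0).coeff 0 = 1 := fun i hi =>
    ((hfam 0 (Nat.zero_le m)).isPadeAt c hi).2.2.1.trans hb0
  refine exists_forall_of_update_solvable (fun r βc αc => IsPadeAt c b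
    (extPoly A (k + 2) αn βn βc αc) (extPoly B (k + 2) αn βn βc αc) (k + 2) r) m ?_ ?_
  · exact fun r _ _ _ _ h hP => hP.congr c (extPoly_congr _ h)
      fun s hs => extPoly_congr _ fun t ht => h t (ht.trans hs)
  · exact fun r βc αc hr hrm => exists_update_isPadeAt (fun p hp => hfam p (hp.trans hrm)) hr
      (coeff_padeError_zero_succ_ne_zero c (by omega) (hB0 _ le_rfl) hd1)
      (coeff_padeError_zero_succ_ne_zero c (by omega) (hB0 _ (by omega)) hd2) βc αc

/-- **Bivariate Jacobi-type recursion** (the paper's Proposition): given level-`p` families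
up to order `n-1` for all `p ≤ m`, a Jacobi extension of the level-`0` family to order `n`,
and the nondegeneracy conditions, there exist correction coefficients `β̌^{n,q}_0`,
`α̌^{n,q}_0` such that the recursion (with the copy identities) extends every level
`q = 1,…,m` to order `n`. -/
theorem bivariate_jacobi {K : Type*} [Field K] [CharZero K]
    (c : ℕ → ℕ → K) (hc00 : c 0 0 = 0)
    (m n : ℕ) (hm : 1 ≤ m) (hn : 1 ≤ n)
    (b : ℕ → K) (hb0 : b 0 = 1)
    (A B : ℤ → ℕ → Polynomial K)
    (hfam : ∀ p ≤ m, IsLevelFamily c b A B p (n - 1))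
    (hneg : n = 1 → ∀ p ≤ m, A (-1) p = 0 ∧ B (-1) p = 0)
    (hc10 : c 1 0 ≠ 0)
    (αn βn : K)
    (hext :
      (extPoly A n αn βn (fun _ => 0) (fun _ => 0) 0).natDegree ≤ n ∧
      (extPoly B n αn βn (fun _ => 0) (fun _ => 0) 0).natDegree ≤ n ∧
      (extPoly B n αn βn (fun _ => 0) (fun _ => 0) 0).coeff 0 = b 0 ∧
      ∀ j ≤ 2 * n,
        (extPoly A n αn βn (fun _ => 0) (fun _ => 0) 0
          - extPoly B n αn βn (fun _ => 0) (fun _ => 0) 0 * truncBiv c (2 * n) 0).coeff j = 0)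
    (hd1 : coeffZ (A ((n : ℤ) - 1) 0 - B ((n : ℤ) - 1) 0 * truncBiv c (2 * (n - 1)) 0)
        (2 * (n : ℤ) - 1) ≠ cZ c (2 * (n : ℤ) - 1) 0)
    (hd2 : coeffZ (A ((n : ℤ) - 2) 0 - B ((n : ℤ) - 2) 0 * truncBiv c (2 * (n - 2)) 0)
        (2 * (n : ℤ) - 3) ≠ cZ c (2 * (n : ℤ) - 3) 0) :
    ∃ βc αc : ℕ → K,
      ∀ q, 1 ≤ q → q ≤ m →
        (extPoly A n αn βn βc αc q).natDegree ≤ n ∧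
        (extPoly B n αn βn βc αc q).natDegree ≤ n ∧
        (extPoly B n αn βn βc αc q).coeff 0 = b q ∧
        ∀ j ≤ 2 * n,
          (extPoly A n αn βn βc αc q
            - ∑ s ∈ Finset.range (q + 1),
                extPoly B n αn βn βc αc s * truncBiv c (2 * n) (q - s)).coeff j = 0 :=
  bivariate_jacobi_general c m n b hb0 A B hfam αn βn hd1 hd2
end

section
/- Fix n ≥ 2. Let (A_{n−1}, B_{n−1}) be an [(n−1)/(n−1)] Padé pair and (A_{n−2}, B_{n−2}) an [(n−2)/(n−2)] Padé pair for the same series, and assume e^{(n−1)}_{2n−1} − c_{2n−1} ≠ 0 and e^{(n−2)}_{2n−3} − c_{2n−3} ≠ 0. Then for every pair of scalars σ_{2n−1}, σ_{2n} ∈ K there exist scalars b*, b** ∈ K, depending K-linearly on (σ_{2n−1}, σ_{2n}) and with b** = σ_{2n−1}/(e^{(n−2)}_{2n−3} − c_{2n−3}), such that the polynomials A* := x·b*·A_{n−1} + x²·b**·A_{n−2} and B* := x·b*·B_{n−1} + x²·b**·B_{n−2} satisfy: the polynomial A* − B*·C_{2n} − σ_{2n−1}·x^{2n−1} − σ_{2n}·x^{2n}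 has zero coefficients in all degrees 0,…,2n. (This is the remainder-term representation of the paper's Appendix.) -/
/-! The error `A − B·C_N` of a Padé pair of order `k` is divisible by `x^{2k+1}` for every
`N ≥ 2k`, and for `N > 2k` its coefficient at `x^{2k+1}` is `e_{2k+1} − c_{2k+1}` (because
`B(0) = 1`). Hence, with `N = 2n`, `x·E_{n−1}` starts at degree `2n` and `x²·E_{n−2}` at degree
`2n − 1`, with nonzero lowest coefficients `d₁`, `d₂`, and the remainder
`σ_{2n−1} x^{2n−1} + σ_{2n} x^{2n}` is matched modulo `x^{2n+1}` by solving the triangular system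
`b**·d₂ = σ_{2n−1}`, `b*·d₁ + b**·v = σ_{2n}`, where `v` is the next coefficient of `x²·E_{n−2}`. -/

open Polynomial

theorem Polynomial.coeff_mul_of_X_pow_dvd {R : Type*} [Semiring R] {q : R[X]} {n : ℕ}
    (h : X ^ n ∣ q) (p : R[X]) : (p * q).coeff n = p.coeff 0 * q.coeff n := by
  obtain ⟨r, rfl⟩ := h
  simp [X_pow_mul, ← mul_assoc, coeff_mul_X_pow', mul_coeff_zero]

section Pade

variable {K : Type*} [Field K]

theorem coeff_seriesTrunc (c : ℕ → K) (N k : ℕ) :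
    (seriesTrunc c N).coeff k = if k ≤ N then c k else 0 := by
  simp only [seriesTrunc, finsetSum_coeff, coeff_C_mul, coeff_X_pow, mul_ite, mul_one, mul_zero,
    Finset.sum_ite_eq, Finset.mem_range, Nat.lt_succ_iff]

theorem X_pow_dvd_seriesTrunc_sub_seriesTrunc (c : ℕ → K) {M N : ℕ} (h : M ≤ N) :
    X ^ (M + 1) ∣ seriesTrunc c N - seriesTrunc c M := by
  rw [X_pow_dvd_iff]
  intro d hd
  simp only [coeff_sub, coeff_seriesTrunc, if_pos (show d ≤ N by omega),
    if_pos (show d ≤ M by omega), sub_self]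

theorem IsPadePair.X_pow_dvd {c : ℕ → K} {k : ℕ} {A B : K[X]} (h : IsPadePair c k A B) :
    X ^ (2 * k + 1) ∣ A - B * seriesTrunc c (2 * k) :=
  let ⟨_, _, _, _, hE⟩ := h
  X_pow_dvd_iff.mpr fun j hj => hE j (Nat.lt_succ_iff.mp hj)

theorem IsPadePair.X_pow_dvd_sub_mul_seriesTrunc {c : ℕ → K} {k N : ℕ} {A B : K[X]}
    (h : IsPadePair c k A B) (hN : 2 * k ≤ N) :
    X ^ (2 * k + 1) ∣ A - B * seriesTrunc c N := by
  rw [show A - B * seriesTrunc c N =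
      (A - B * seriesTrunc c (2 * k)) - B * (seriesTrunc c N - seriesTrunc c (2 * k)) by ring]
  exact dvd_sub h.X_pow_dvd (dvd_mul_of_dvd_right (X_pow_dvd_seriesTrunc_sub_seriesTrunc c hN) B)

theorem IsPadePair.coeff_sub_mul_seriesTrunc {c : ℕ → K} {k N : ℕ} {A B : K[X]}
    (h : IsPadePair c k A B) (hN : 2 * k < N) :
    (A - B * seriesTrunc c N).coeff (2 * k + 1) =
      (A - B * seriesTrunc c (2 * k)).coeff (2 * k + 1) - c (2 * k + 1) := by
  obtain ⟨-, -, -, hB, -⟩ := h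
  rw [show A - B * seriesTrunc c N =
      (A - B * seriesTrunc c (2 * k)) - B * (seriesTrunc c N - seriesTrunc c (2 * k)) by ring,
    coeff_sub, coeff_mul_of_X_pow_dvd (X_pow_dvd_seriesTrunc_sub_seriesTrunc c hN.le), hB, one_mul,
    coeff_sub (seriesTrunc c N), coeff_seriesTrunc, coeff_seriesTrunc,
    if_pos (show 2 * k + 1 ≤ N by omega), if_neg (by omega), sub_zero]

end Pade

theorem exists_linearMap_X_pow_dvd_sub {K : Type*} [Field K] {P Q : K[X]} {N : ℕ}
    (hP : X ^ (N + 1) ∣ P) (hQ : X ^ N ∣ Q) (hPN : P.coeff (N + 1) ≠ 0) (hQN : Q.coeff N ≠ 0) :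
    ∃ a b : (K × K) →ₗ[K] K, ∀ σ₁ σ₂ : K,
      b (σ₁, σ₂) = σ₁ / Q.coeff N ∧
      X ^ (N + 2) ∣ C (a (σ₁, σ₂)) * P + C (b (σ₁, σ₂)) * Q
        - C σ₁ * X ^ N - C σ₂ * X ^ (N + 1) := by
  refine ⟨(P.coeff (N + 1))⁻¹ •
      (LinearMap.snd K K K - (Q.coeff (N + 1) / Q.coeff N) • LinearMap.fst K K K),
    (Q.coeff N)⁻¹ • LinearMap.fst K K K, fun σ₁ σ₂ => ⟨?_, ?_⟩⟩
  · simp [div_eq_inv_mul]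
  rw [X_pow_dvd_iff] at hP hQ ⊢
  intro j hj
  simp only [LinearMap.smul_apply, LinearMap.sub_apply, LinearMap.fst_apply, LinearMap.snd_apply,
    smul_eq_mul, coeff_sub, coeff_add, coeff_C_mul, coeff_X_pow]
  obtain hj | hj | hj : j < N ∨ j = N ∨ j = N + 1 := by omega
  · simp [hP j (by omega), hQ j hj, hj.ne, (show j ≠ N + 1 by omega)]
  · simp only [hj, hP N (by omega), if_true, if_neg (show N ≠ N + 1 by omega)]
    field_simp
    ring
  · simp only [hj, if_neg (show N + 1 ≠ N by omega), if_true]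
    field_simp
    ring

theorem remainder_representation_general {K : Type*} [Field K]
    (c : ℕ → K) (n : ℕ) (hn : 2 ≤ n)
    (A1 B1 A2 B2 : Polynomial K)
    (h1 : IsPadePair c (n - 1) A1 B1)
    (h2 : IsPadePair c (n - 2) A2 B2)
    (hd1 : (A1 - B1 * seriesTrunc c (2 * (n - 1))).coeff (2 * n - 1) - c (2 * n - 1) ≠ 0)
    (hd2 : (A2 - B2 * seriesTrunc c (2 * (n - 2))).coeff (2 * n - 3) - c (2 * n - 3) ≠ 0) :
    ∃ bs bss : (K × K) →ₗ[K] K,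
      ∀ σ₁ σ₂ : K,
        bss (σ₁, σ₂) = σ₁ /
            ((A2 - B2 * seriesTrunc c (2 * (n - 2))).coeff (2 * n - 3) - c (2 * n - 3)) ∧
        ∀ j ≤ 2 * n,
          (Polynomial.X * Polynomial.C (bs (σ₁, σ₂)) * A1
              + Polynomial.X ^ 2 * Polynomial.C (bss (σ₁, σ₂)) * A2
              - (Polynomial.X * Polynomial.C (bs (σ₁, σ₂)) * B1
                  + Polynomial.X ^ 2 * Polynomial.C (bss (σ₁, σ₂)) * B2)
                * seriesTrunc c (2 * n)
              - Polynomial.C σ₁ * Polynomial.X ^ (2 * n - 1)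
              - Polynomial.C σ₂ * Polynomial.X ^ (2 * n)).coeff j = 0 := by
  set E₁ := A1 - B1 * seriesTrunc c (2 * n)
  set E₂ := A2 - B2 * seriesTrunc c (2 * n)
  have hP : X ^ (2 * n - 1 + 1) ∣ X * E₁ := by
    rw [show 2 * n - 1 + 1 = 2 * (n - 1) + 1 + 1 by omega, pow_succ']
    exact mul_dvd_mul_left X (h1.X_pow_dvd_sub_mul_seriesTrunc (by omega))
  have hQ : X ^ (2 * n - 1) ∣ X ^ 2 * E₂ := by
    rw [show 2 * n - 1 = 2 + (2 * (n - 2) + 1) by omega, pow_add]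
    exact mul_dvd_mul_left _ (h2.X_pow_dvd_sub_mul_seriesTrunc (by omega))
  have hPN : (X * E₁).coeff (2 * n - 1 + 1) =
      (A1 - B1 * seriesTrunc c (2 * (n - 1))).coeff (2 * n - 1) - c (2 * n - 1) := by
    rw [coeff_X_mul, show 2 * n - 1 = 2 * (n - 1) + 1 by omega]
    exact h1.coeff_sub_mul_seriesTrunc (by omega)
  have hQN : (X ^ 2 * E₂).coeff (2 * n - 1) =
      (A2 - B2 * seriesTrunc c (2 * (n - 2))).coeff (2 * n - 3) - c (2 * n - 3) := by
    rw [show 2 * n - 1 = 2 * (n - 2) + 1 + 2 by omega, coeff_X_pow_mul,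
      show 2 * n - 3 = 2 * (n - 2) + 1 by omega]
    exact h2.coeff_sub_mul_seriesTrunc (by omega)
  obtain ⟨a, b, hab⟩ := exists_linearMap_X_pow_dvd_sub hP hQ (hPN ▸ hd1) (hQN ▸ hd2)
  refine ⟨a, b, fun σ₁ σ₂ => ⟨hQN ▸ (hab σ₁ σ₂).1, fun j hj => ?_⟩⟩
  have hR := X_pow_dvd_iff.mp (hab σ₁ σ₂).2 j (by omega)
  rw [show 2 * n - 1 + 1 = 2 * n by omega] at hR
  rw [← hR]
  congr 1
  simp only [E₁, E₂]
  ring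

/-- **Remainder-term representation** (the paper's Appendix): any remainder
`σ_{2n-1} x^{2n-1} + σ_{2n} x^{2n}` can be represented via the previous Padé pairs,
with coefficients `b*`, `b**` depending linearly on `(σ_{2n-1}, σ_{2n})`. -/
theorem remainder_representation {K : Type*} [Field K] [CharZero K]
    (c : ℕ → K) (hc0 : c 0 = 0) (n : ℕ) (hn : 2 ≤ n)
    (A1 B1 A2 B2 : Polynomial K)
    (h1 : IsPadePair c (n - 1) A1 B1)
    (h2 : IsPadePair c (n - 2) A2 B2)
    (hd1 : (A1 - B1 * seriesTrunc c (2 * (n - 1))).coeff (2 * n - 1) - c (2 * n - 1) ≠ 0)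
    (hd2 : (A2 - B2 * seriesTrunc c (2 * (n - 2))).coeff (2 * n - 3) - c (2 * n - 3) ≠ 0) :
    ∃ bs bss : (K × K) →ₗ[K] K,
      ∀ σ₁ σ₂ : K,
        bss (σ₁, σ₂) = σ₁ /
            ((A2 - B2 * seriesTrunc c (2 * (n - 2))).coeff (2 * n - 3) - c (2 * n - 3)) ∧
        ∀ j ≤ 2 * n,
          (Polynomial.X * Polynomial.C (bs (σ₁, σ₂)) * A1
              + Polynomial.X ^ 2 * Polynomial.C (bss (σ₁, σ₂)) * A2
              - (Polynomial.X * Polynomial.C (bs (σ₁, σ₂)) * B1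
                  + Polynomial.X ^ 2 * Polynomial.C (bss (σ₁, σ₂)) * B2)
                * seriesTrunc c (2 * n)
              - Polynomial.C σ₁ * Polynomial.X ^ (2 * n - 1)
              - Polynomial.C σ₂ * Polynomial.X ^ (2 * n)).coeff j = 0 :=
  remainder_representation_general c n hn A1 B1 A2 B2 h1 h2 hd1 hd2
end

section
/- Let α, β ∈ ℝ with β not a positive integer. The power series v(x) = Σ_{k=0}^∞ (−αβ)^k · x^k / (k! · (1−β)_k) converges for every real x, and the function v satisfies x·v″(x) + (1 − β)·v′(x) + α·β·v(x) = 0 for all x ∈ ℝ. (This is the regular-at-zero solution of the linearized Riccati equation used in the paper.) -/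
/-!
The coefficients obey `c (n + 1) = -αβ / ((n + 1) (n + 1 - β)) * c n`, a ratio tending to `0`,
so the series is entire and may be differentiated termwise. Substituting it, the coefficient of
`x ^ n` in `x v'' + (1 - β) v' + αβ v` is `(n + 1 - β) (n + 1) c (n + 1) + αβ c n`, which vanishes
by the recurrence as soon as `n + 1 - β ≠ 0`, i.e. because `β` is not a positive integer.
-/

/-- The coefficients `(-αβ)^k / (k! (1-β)_k)` of the regular-at-zero solution of the
linearized Riccati equation, where `(c)_k` is the Pochhammer symbol. -/
noncomputable def riccatiRegularCoeff (α β : ℝ) (k : ℕ) : ℝ :=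
  (-(α * β)) ^ k / ((k.factorial : ℝ) * (ascPochhammer ℝ k).eval (1 - β))

open Filter Topology

section EntirePowerSeries

variable {𝕜 : Type*} [RCLike 𝕜] {c : ℕ → 𝕜}

def derivCoeff (c : ℕ → 𝕜) (n : ℕ) : 𝕜 := ((n + 1 : ℕ) : 𝕜) * c (n + 1)

theorem summable_mul_pow_of_summable_norm_mul_pow
    (hc : ∀ r : ℝ, Summable fun n => ‖c n‖ * r ^ n) (x : 𝕜) :
    Summable fun n => c n * x ^ n :=
  .of_norm_bounded (hc ‖x‖) fun n => by rw [norm_mul, norm_pow]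

theorem summable_norm_derivCoeff_mul_pow (hc : ∀ r : ℝ, Summable fun n => ‖c n‖ * r ^ n)
    (r : ℝ) : Summable fun n => ‖derivCoeff c n‖ * r ^ n := by
  set R := |r| + 1
  have hR : 1 ≤ R := le_add_of_nonneg_left (abs_nonneg r)
  refine .of_norm_bounded ((summable_nat_add_iff 1).2 (hc (2 * R))) fun n => ?_
  have h2 : ((n + 1 : ℕ) : ℝ) ≤ 2 ^ (n + 1) := by exact_mod_cast Nat.lt_two_pow_self.le
  have hr : |r| ^ n ≤ R ^ (n + 1) :=
    (pow_le_pow_left₀ (abs_nonneg r) (by simp [R]) n).trans (pow_le_pow_right₀ hR n.le_succ)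
  calc ‖‖derivCoeff c n‖ * r ^ n‖
        = ‖c (n + 1)‖ * (((n + 1 : ℕ) : ℝ) * |r| ^ n) := by
        simp only [derivCoeff, norm_mul, norm_pow, RCLike.norm_natCast, Real.norm_eq_abs,
          abs_norm]
        ring
    _ ≤ ‖c (n + 1)‖ * (2 ^ (n + 1) * R ^ (n + 1)) := by gcongr
    _ = ‖c (n + 1)‖ * (2 * R) ^ (n + 1) := by rw [mul_pow]

theorem hasDerivAt_tsum_mul_pow (hc : ∀ r : ℝ, Summable fun n => ‖c n‖ * r ^ n) (x : 𝕜) :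
    HasDerivAt (fun z => ∑' n, c n * z ^ n) (∑' n, derivCoeff c n * x ^ n) x := by
  set R := ‖x‖ + 1
  have hu : Summable fun n => ‖c n‖ * (n * R ^ (n - 1)) := by
    refine (summable_nat_add_iff 1).1
      ((summable_norm_derivCoeff_mul_pow hc R).congr fun n => ?_)
    simp only [derivCoeff, norm_mul, RCLike.norm_natCast, Nat.add_sub_cancel]
    ring
  have hbound : ∀ n, ∀ z ∈ Metric.ball (0 : 𝕜) R,
      ‖c n * (n * z ^ (n - 1))‖ ≤ ‖c n‖ * (n * R ^ (n - 1)) := by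
    intro n z hz
    rw [mem_ball_zero_iff] at hz
    rw [norm_mul, norm_mul, RCLike.norm_natCast, norm_pow]
    gcongr
  have hx : x ∈ Metric.ball (0 : 𝕜) R := by simp [R]
  have hderiv := hasDerivAt_tsum_of_isPreconnected (g := fun n z => c n * z ^ n)
    (g' := fun n z => c n * (n * z ^ (n - 1))) hu Metric.isOpen_ball
    (convex_ball 0 R).isPreconnected (fun n z _ => (hasDerivAt_pow n z).const_mul (c n))
    hbound (Metric.mem_ball_self (by positivity))
    (summable_mul_pow_of_summable_norm_mul_pow hc 0) hx
  suffices h : ∑' n, c n * (n * x ^ (n - 1)) = ∑' n, derivCoeff c n * x ^ n by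
    rwa [h] at hderiv
  have hsum : Summable fun n => c n * (n * x ^ (n - 1)) :=
    .of_norm_bounded hu fun n => hbound n x hx
  rw [hsum.tsum_eq_zero_add]
  simp only [Nat.cast_zero, zero_mul, mul_zero, zero_add, Nat.add_sub_cancel, derivCoeff]
  exact tsum_congr fun n => by push_cast; ring

theorem deriv_tsum_mul_pow (hc : ∀ r : ℝ, Summable fun n => ‖c n‖ * r ^ n) :
    deriv (fun z => ∑' n, c n * z ^ n) = fun x => ∑' n, derivCoeff c n * x ^ n :=
  funext fun x => (hasDerivAt_tsum_mul_pow hc x).deriv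

theorem hasSum_natCast_mul_mul_pow (hc : ∀ r : ℝ, Summable fun n => ‖c n‖ * r ^ n) (x : 𝕜) :
    HasSum (fun n => n * c n * x ^ n) (x * ∑' n, derivCoeff c n * x ^ n) := by
  refine (hasSum_nat_add_iff' 1).1 ?_
  simpa [derivCoeff, pow_succ, mul_comm, mul_left_comm, mul_assoc] using
    ((summable_mul_pow_of_summable_norm_mul_pow (summable_norm_derivCoeff_mul_pow hc) x).hasSum
      |>.mul_left x)

theorem hasSum_mul_deriv_deriv_add_mul_deriv_add_mul_tsum
    (hc : ∀ r : ℝ, Summable fun n => ‖c n‖ * r ^ n) (a b x : 𝕜) :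
    HasSum (fun n => ((n + a) * derivCoeff c n + b * c n) * x ^ n)
      (x * deriv (deriv fun z => ∑' n, c n * z ^ n) x
        + a * deriv (fun z => ∑' n, c n * z ^ n) x + b * ∑' n, c n * x ^ n) := by
  have hc' := summable_norm_derivCoeff_mul_pow hc
  rw [deriv_tsum_mul_pow hc, deriv_tsum_mul_pow hc']
  convert ((hasSum_natCast_mul_mul_pow hc' x).add
    ((summable_mul_pow_of_summable_norm_mul_pow hc' x).hasSum.mul_left a)).add
    ((summable_mul_pow_of_summable_norm_mul_pow hc x).hasSum.mul_left b) using 1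
  funext n
  ring

theorem summable_norm_mul_pow_of_succ_eq_mul {q : ℕ → 𝕜} (hq : Tendsto q atTop (𝓝 0))
    (hcq : ∀ n, c (n + 1) = q n * c n) (r : ℝ) : Summable fun n => ‖c n‖ * r ^ n := by
  have hqr : Tendsto (fun n => ‖q n‖ * |r|) atTop (𝓝 0) := by
    simpa using hq.norm.mul_const |r|
  refine summable_of_ratio_norm_eventually_le (r := 1 / 2) (by norm_num) ?_
  filter_upwards [hqr.eventually (ge_mem_nhds (by norm_num : (0 : ℝ) < 1 / 2))] with n hn
  calc ‖‖c (n + 1)‖ * r ^ (n + 1)‖ = ‖q n‖ * |r| * ‖‖c n‖ * r ^ n‖ := by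
        simp only [hcq, norm_mul, norm_pow, Real.norm_eq_abs, abs_norm]
        ring
    _ ≤ 1 / 2 * ‖‖c n‖ * r ^ n‖ := by gcongr

end EntirePowerSeries

-- Valid for every `β`: once `(1 - β)_n = 0`, both sides are `0` by the convention `x / 0 = 0`.
theorem riccatiRegularCoeff_succ (α β : ℝ) (n : ℕ) :
    riccatiRegularCoeff α β (n + 1)
      = -(α * β) / ((n + 1) * (n + 1 - β)) * riccatiRegularCoeff α β n := by
  simp only [riccatiRegularCoeff, pow_succ, Nat.factorial_succ, ascPochhammer_succ_eval]
  rw [div_mul_div_comm]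
  push_cast
  congr 1 <;> ring

theorem summable_norm_riccatiRegularCoeff_mul_pow (α β r : ℝ) :
    Summable fun n => ‖riccatiRegularCoeff α β n‖ * r ^ n := by
  have hn : Tendsto (fun n : ℕ => (n : ℝ) + 1) atTop atTop :=
    tendsto_atTop_add_const_right _ 1 tendsto_natCast_atTop_atTop
  have hratio : Tendsto (fun n : ℕ => -(α * β) / ((n + 1) * (n + 1 - β))) atTop (𝓝 0) := by
    simpa [div_eq_mul_inv, sub_eq_add_neg] using ((tendsto_inv_atTop_zero.comp
      (hn.atTop_mul_atTop₀ (tendsto_atTop_add_const_right _ (-β) hn))).const_mul (-(α * β)))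
  exact summable_norm_mul_pow_of_succ_eq_mul hratio (riccatiRegularCoeff_succ α β) r

theorem riccatiRegularCoeff_ode (α β : ℝ) (hβ : ∀ k : ℕ, 0 < k → β ≠ (k : ℝ)) (n : ℕ) :
    ((n : ℝ) + (1 - β)) * derivCoeff (riccatiRegularCoeff α β) n
      + α * β * riccatiRegularCoeff α β n = 0 := by
  have hn : (n : ℝ) + 1 - β ≠ 0 := by
    have := hβ (n + 1) n.succ_pos
    push_cast at this
    exact fun h => this (by linarith)
  rw [derivCoeff, riccatiRegularCoeff_succ]
  push_cast
  field_simp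
  ring

/-- **The regular-at-zero solution of the linearized Riccati equation**: for `β` not a
positive integer, the series `v(x) = ∑_{k} (-αβ)^k x^k / (k! (1-β)_k)` converges for every
real `x` and satisfies `x v'' + (1-β) v' + α β v = 0` on all of `ℝ`. -/
theorem riccati_regular_solution (α β : ℝ) (hβ : ∀ k : ℕ, 0 < k → β ≠ (k : ℝ)) :
    (∀ x : ℝ, Summable fun k : ℕ => riccatiRegularCoeff α β k * x ^ k) ∧
      (∀ x : ℝ,
        x * deriv (deriv (fun t : ℝ => ∑' k : ℕ, riccatiRegularCoeff α β k * t ^ k)) x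
          + (1 - β) * deriv (fun t : ℝ => ∑' k : ℕ, riccatiRegularCoeff α β k * t ^ k) x
          + α * β * ∑' k : ℕ, riccatiRegularCoeff α β k * x ^ k = 0) := by
  have hc := summable_norm_riccatiRegularCoeff_mul_pow α β
  refine ⟨summable_mul_pow_of_summable_norm_mul_pow hc, fun x => ?_⟩
  refine (hasSum_mul_deriv_deriv_add_mul_deriv_add_mul_tsum hc (1 - β) (α * β) x).unique ?_
  simpa only [riccatiRegularCoeff_ode α β hβ, zero_mul] using hasSum_zero
end

section
/- Let α, β ∈ ℝ with β ≠ 0 and β not a positive integer. In the ring ℝ[[X]] of formal power series, let D = Σ_{m=0}^∞ (−αβ)^m X^m/(m!·(1−β)_m), which has constant term 1 and is therefore invertible, and let N = (X/β)·D′, i.e. N = Σ_{m=1}^∞ (−1)^m α^m β^{m−1} X^m/((m−1)!·(1−β)_m). Then the formal power series w := N·D^{−1} has zero constant term and satisfies the formal Riccati equation X·w′ − β·w + β·w² + α·X = 0 in ℝ[[X]]. (This is the x-only part of the paper's rational form (riccrat) of the Riccati solution, with denominator coefficients b_{m,0} = (−αβ)^m/(m!·(1−β)_m).) -/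
/-!
`D` is the hypergeometric series `₀F₁(; 1 - β; -αβX)`, so it solves the linear equation
`X D'' + (1 - β) D' + αβ D = 0`, and `w = N / D = (X / β) D' / D` is, up to the factor `X / β`,
its logarithmic derivative. This is the usual linearisation of a Riccati equation run backwards:
multiplying `X w' - β w + β w² + α X` by `β D` gives `X` times the linear equation for `D`.
-/

open PowerSeries

/-- `D = ∑_m (-αβ)^m X^m / (m! (1-β)_m)`, the denominator series of the paper's rational
form of the Riccati solution ((c)_k is the Pochhammer symbol). -/
noncomputable def riccatiDenom (α β : ℝ) : PowerSeries ℝ :=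
  PowerSeries.mk fun m : ℕ =>
    (-(α * β)) ^ m / ((m.factorial : ℝ) * (ascPochhammer ℝ m).eval (1 - β))

/-- `N = ∑_{m≥1} (-1)^m α^m β^(m-1) X^m / ((m-1)! (1-β)_m)`, the numerator series. -/
noncomputable def riccatiNumer (α β : ℝ) : PowerSeries ℝ :=
  PowerSeries.mk fun m : ℕ =>
    if m = 0 then 0
    else (-1 : ℝ) ^ m * α ^ m * β ^ (m - 1) /
      (((m - 1).factorial : ℝ) * (ascPochhammer ℝ m).eval (1 - β))

section Riccati

variable {R : Type*} [CommRing R]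

theorem PowerSeries.coeff_X_mul_derivative (f : R⟦X⟧) (n : ℕ) :
    coeff n (X * d⁄dX R f) = coeff n f * n := by
  cases n <;> simp [coeff_succ_X_mul, coeff_derivative]

theorem riccati_of_linear_ode [IsDomain R] {a b : R} (hb : b ≠ 0) {D w : R⟦X⟧}
    (hD : D ≠ 0) (hw : C b * w * D = X * d⁄dX R D)
    (hlin : X * d⁄dX R (d⁄dX R D) + C (1 - b) * d⁄dX R D + C (a * b) * D = 0) :
    X * d⁄dX R w - C b * w + C b * w ^ 2 + C a * X = 0 := by
  have hw' : C b * (d⁄dX R w * D + w * d⁄dX R D) = d⁄dX R D + X * d⁄dX R (d⁄dX R D) := by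
    have := congrArg (d⁄dX R) hw
    simp only [Derivation.leibniz, derivative_C, derivative_X, smul_eq_mul] at this
    linear_combination this
  have hCb : C b * D ≠ 0 := mul_ne_zero ((map_ne_zero_iff _ C_injective).mpr hb) hD
  refine (mul_eq_zero.mp ?_).resolve_right hCb
  simp only [map_sub, map_one, map_mul] at hlin
  linear_combination X * hw' + (C b * w - C b) * hw + X * hlin

end Riccati

theorem ascPochhammer_eval_one_sub_ne_zero {β : ℝ} (hβ : ∀ k : ℕ, 0 < k → β ≠ (k : ℝ))
    (m : ℕ) : (ascPochhammer ℝ m).eval (1 - β) ≠ 0 := by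
  induction m with
  | zero => simp
  | succ n ih =>
    rw [ascPochhammer_succ_eval]
    refine mul_ne_zero ih fun h => hβ (n + 1) n.succ_pos ?_
    push_cast
    linarith

theorem constantCoeff_riccatiDenom (α β : ℝ) : constantCoeff (riccatiDenom α β) = 1 := by
  simp [riccatiDenom]

theorem coeff_succ_riccatiDenom {α β : ℝ} (hβ : ∀ k : ℕ, 0 < k → β ≠ (k : ℝ)) (m : ℕ) :
    coeff (m + 1) (riccatiDenom α β) * ((m + 1) * (1 - β + m)) =
      -(α * β) * coeff m (riccatiDenom α β) := by
  have hpoch := ascPochhammer_eval_one_sub_ne_zero hβ m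
  have hm : 1 - β + m ≠ 0 := fun h => hβ (m + 1) m.succ_pos (by push_cast; linarith)
  simp only [riccatiDenom, coeff_mk, ascPochhammer_succ_eval, Nat.factorial_succ]
  push_cast
  field_simp
  ring

theorem riccatiDenom_linear_ode {α β : ℝ} (hβ : ∀ k : ℕ, 0 < k → β ≠ (k : ℝ)) :
    X * d⁄dX ℝ (d⁄dX ℝ (riccatiDenom α β)) + C (1 - β) * d⁄dX ℝ (riccatiDenom α β)
      + C (α * β) * riccatiDenom α β = 0 := by
  ext n
  simp only [map_add, coeff_X_mul_derivative, coeff_C_mul, coeff_derivative, map_zero]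
  linear_combination coeff_succ_riccatiDenom (α := α) hβ n

theorem riccatiNumer_eq_C_inv_mul_X_mul_derivative (α : ℝ) {β : ℝ} (hβ : β ≠ 0) :
    riccatiNumer α β = C β⁻¹ * X * d⁄dX ℝ (riccatiDenom α β) := by
  ext n
  rw [mul_assoc, coeff_C_mul, coeff_X_mul_derivative]
  cases n with
  | zero => simp [riccatiNumer]
  | succ m =>
    simp only [riccatiNumer, riccatiDenom, coeff_mk, Nat.succ_ne_zero, if_false,
      Nat.add_sub_cancel, Nat.factorial_succ]
    push_cast
    field_simp
    ring

/-- **The `x`-only part of the paper's rational form of the Riccati solution**: for `β ≠ 0`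
not a positive integer, `D` has constant term `1` (hence is invertible),
`N = (X/β)·D′`, and `w = N·D⁻¹` has zero constant term and satisfies the formal Riccati
equation `X w' - β w + β w² + α X = 0` in `ℝ[[X]]`. -/
theorem riccati_formal_rational (α β : ℝ) (hβ0 : β ≠ 0)
    (hβ : ∀ k : ℕ, 0 < k → β ≠ (k : ℝ)) :
    PowerSeries.constantCoeff (riccatiDenom α β) = 1 ∧
    IsUnit (riccatiDenom α β) ∧
    riccatiNumer α β =
      PowerSeries.C β⁻¹ * PowerSeries.X * PowerSeries.derivative ℝ (riccatiDenom α β) ∧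
    PowerSeries.constantCoeff (riccatiNumer α β * (riccatiDenom α β)⁻¹) = 0 ∧
    PowerSeries.X *
        PowerSeries.derivative ℝ (riccatiNumer α β * (riccatiDenom α β)⁻¹)
      - PowerSeries.C β * (riccatiNumer α β * (riccatiDenom α β)⁻¹)
      + PowerSeries.C β * (riccatiNumer α β * (riccatiDenom α β)⁻¹) ^ 2
      + PowerSeries.C α * PowerSeries.X = 0 := by
  have hD := constantCoeff_riccatiDenom α β
  have hD0 : constantCoeff (riccatiDenom α β) ≠ 0 := by simp [hD]
  have hN := riccatiNumer_eq_C_inv_mul_X_mul_derivative α hβ0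
  refine ⟨hD, isUnit_iff_constantCoeff.mpr (by simp [hD]), hN, by simp [hN], ?_⟩
  refine riccati_of_linear_ode hβ0 (fun h => by simp [h] at hD) ?_
    (riccatiDenom_linear_ode hβ)
  rw [mul_assoc, mul_assoc, PowerSeries.inv_mul_cancel _ hD0, mul_one, hN, ← mul_assoc,
    ← mul_assoc, ← map_mul, mul_inv_cancel₀ hβ0, map_one, one_mul]
end

section
/- Let α ∈ ℝ and let β > 0 be not an integer. Then for every γ ∈ ℝ there exists a unique formal power series f ∈ ℝ[[X, Y]] in two variables whose constant coefficient is 0 and whose coefficient of Y (i.e. of X^0Y^1) is γ, satisfying X·∂f/∂X + β·Y·∂f/∂Y − β·f + β·f² + α·X = 0 in ℝ[[X, Y]]. (Upon substituting Y = x^β this is the expansion of the general solution of the singular Riccati equation x·w′ − β·w + β·w² + α·x = 0 as a bivariate series in x and x^β, with arbitrary parameter c_{0,1} = γ.) -/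
/-!
Once the constant coefficient vanishes, the coefficient of `X^n Y^m` in the equation reads
`(n + β m - β) c_{n,m} + β ∑_{p + q = (n,m), p, q ≠ 0} c_p c_q + α [(n,m) = (1,0)] = 0`.
For `β > 0` not an integer the weight `n + β m - β` vanishes only at `(0,1)`, where the
coefficient is free and set to `γ`; at every other multi-index the equation determines `c_{n,m}`
from coefficients at strictly smaller multi-indices. So the solutions are the fixed points of a
map whose value at `d` depends only on the values below `d`, and since `<` on `Fin 2 →₀ ℕ` is
well founded such a map has exactly one fixed point.
-/

/-- The Euler-type operator `X·∂/∂X + β·Y·∂/∂Y` on bivariate formal power series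
(variable `0` is `X`, variable `1` is `Y`), defined coefficientwise:
the coefficient of `X^n Y^m` in `eulerOp β f` is `(n + β m)` times that of `f`.
Under the substitution `Y = x^β` this operator becomes `x·d/dx`. -/
noncomputable def eulerOp (β : ℝ) (f : MvPowerSeries (Fin 2) ℝ) : MvPowerSeries (Fin 2) ℝ :=
  fun d => (((d 0 : ℕ) : ℝ) + β * ((d 1 : ℕ) : ℝ)) * MvPowerSeries.coeff (R := ℝ) d f

theorem WellFoundedLT.existsUnique_fixedPt_of_eqOn_Iio {α β : Type*} [Preorder α]
    [WellFoundedLT α] [Nonempty β] (Φ : (α → β) → α → β)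
    (hΦ : ∀ a f g, Set.EqOn f g (Set.Iio a) → Φ f a = Φ g a) : ∃! f, Φ f = f := by
  classical
  let f : α → β := WellFoundedLT.fix fun a rec ↦
    Φ (fun b ↦ if h : b < a then rec b h else Classical.arbitrary β) a
  have hf (a : α) : f a = Φ (fun b ↦ if b < a then f b else Classical.arbitrary β) a := by
    rw [show f a = _ from WellFoundedLT.fix_eq _ a]
    exact hΦ a _ _ fun b hb ↦ by simp [Set.mem_Iio.mp hb, f]
  refine ⟨f, funext fun a ↦ ?_, fun g hg ↦ funext fun a ↦ ?_⟩
  · rw [hf a]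
    exact hΦ a _ _ fun b hb ↦ by simp [Set.mem_Iio.mp hb]
  · induction a using WellFoundedLT.induction with
    | ind a ih =>
      rw [← hg, hf a]
      exact hΦ a _ _ fun b hb ↦ by simp [Set.mem_Iio.mp hb, ih b hb]

namespace MvPowerSeries

open Finset.HasAntidiagonal

variable {σ R : Type*} [DecidableEq σ] [CommSemiring R]

noncomputable def strictSqCoeff (f : MvPowerSeries σ R) (d : σ →₀ ℕ) : R :=
  ∑ p ∈ antidiagonal d with p.1 ≠ 0 ∧ p.2 ≠ 0, coeff p.1 f * coeff p.2 f

theorem coeff_sq_of_constantCoeff_eq_zero {f : MvPowerSeries σ R} (hf : constantCoeff f = 0)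
    (d : σ →₀ ℕ) : coeff d (f ^ 2) = strictSqCoeff f d := by
  rw [strictSqCoeff, Finset.sum_filter, sq, coeff_mul]
  refine Finset.sum_congr rfl fun p _ ↦ ?_
  split_ifs with hp
  · rfl
  · rcases not_and_or.mp hp with h | h <;> simp_all [not_not.mp h]

theorem strictSqCoeff_congr {f g : MvPowerSeries σ R} {d : σ →₀ ℕ}
    (h : ∀ e < d, coeff e f = coeff e g) : strictSqCoeff f d = strictSqCoeff g d := by
  refine Finset.sum_congr rfl fun p hp ↦ ?_
  obtain ⟨hpd, hp1, hp2⟩ : p.1 + p.2 = d ∧ p.1 ≠ 0 ∧ p.2 ≠ 0 := by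
    simpa only [Finset.mem_filter, mem_antidiagonal] using hp
  rw [h p.1 (hpd ▸ lt_add_of_pos_right _ (pos_iff_ne_zero.mpr hp2)),
    h p.2 (hpd ▸ lt_add_of_pos_left _ (pos_iff_ne_zero.mpr hp1))]

theorem strictSqCoeff_of_degree_le_one (f : MvPowerSeries σ R) {d : σ →₀ ℕ}
    (hd : d.degree ≤ 1) : strictSqCoeff f d = 0 := by
  refine Finset.sum_eq_zero fun p hp ↦ absurd hd ?_
  obtain ⟨hpd, hp1, hp2⟩ : p.1 + p.2 = d ∧ p.1 ≠ 0 ∧ p.2 ≠ 0 := by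
    simpa only [Finset.mem_filter, mem_antidiagonal] using hp
  rw [ne_eq, ← Finsupp.degree_eq_zero_iff] at hp1 hp2
  rw [← hpd, map_add]
  omega

end MvPowerSeries

open MvPowerSeries

def riccatiWeight (β : ℝ) (d : Fin 2 →₀ ℕ) : ℝ := (d 0 : ℝ) + β * d 1 - β

theorem riccatiWeight_ne_zero {β : ℝ} (hβpos : 0 < β) (hβ : ∀ k : ℤ, β ≠ k)
    {d : Fin 2 →₀ ℕ} (hd : d ≠ Finsupp.single 1 1) : riccatiWeight β d ≠ 0 := by
  unfold riccatiWeight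
  match hm : d 1 with
  | 0 =>
    have := hβ (d 0)
    push_cast at this ⊢
    intro h
    exact this (by linarith)
  | 1 =>
    have hn : d 0 ≠ 0 := fun hn ↦ hd <| Finsupp.ext fun i ↦ by fin_cases i <;> simp [hn, hm]
    simpa using hn
  | m + 2 =>
    push_cast
    have : (0 : ℝ) ≤ d 0 := Nat.cast_nonneg _
    nlinarith

theorem coeff_riccati {α β : ℝ} {f : MvPowerSeries (Fin 2) ℝ} (hf : constantCoeff f = 0)
    (d : Fin 2 →₀ ℕ) :
    coeff d (eulerOp β f - C β * f + C β * f ^ 2 + C α * X 0) =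
      riccatiWeight β d * coeff d f + β * strictSqCoeff f d
        + if d = Finsupp.single 0 1 then α else 0 := by
  simp only [map_add, map_sub, coeff_C_mul, coeff_sq_of_constantCoeff_eq_zero hf, coeff_X,
    riccatiWeight]
  rw [show coeff d (eulerOp β f) = _ * coeff d f from rfl]
  split_ifs <;> ring

/-- There is no separate case `d = 0`: there the weight is `-β` and `strictSqCoeff f 0 = 0`,
so the step forces the constant coefficient to vanish. -/
noncomputable def riccatiStep (α β γ : ℝ) (f : MvPowerSeries (Fin 2) ℝ) :
    MvPowerSeries (Fin 2) ℝ := fun d ↦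
  if d = Finsupp.single 1 1 then γ
  else -(β * strictSqCoeff f d + if d = Finsupp.single 0 1 then α else 0) / riccatiWeight β d

theorem coeff_riccatiStep (α β γ : ℝ) (f : MvPowerSeries (Fin 2) ℝ) (d : Fin 2 →₀ ℕ) :
    coeff d (riccatiStep α β γ f) = if d = Finsupp.single 1 1 then γ
      else -(β * strictSqCoeff f d + if d = Finsupp.single 0 1 then α else 0) /
        riccatiWeight β d :=
  rfl

theorem riccatiStep_congr (α β γ : ℝ) {f g : MvPowerSeries (Fin 2) ℝ} {d : Fin 2 →₀ ℕ}
    (h : ∀ e < d, coeff e f = coeff e g) : riccatiStep α β γ f d = riccatiStep α β γ g d := by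
  simp only [riccatiStep, strictSqCoeff_congr h]

theorem riccati_iff_riccatiStep_eq {α β : ℝ} (hβpos : 0 < β) (hβ : ∀ k : ℤ, β ≠ k) (γ : ℝ)
    (f : MvPowerSeries (Fin 2) ℝ) :
    (coeff 0 f = 0 ∧ coeff (Finsupp.single 1 1) f = γ ∧
      eulerOp β f - C β * f + C β * f ^ 2 + C α * X 0 = 0) ↔ riccatiStep α β γ f = f := by
  constructor
  · rintro ⟨h0, h1, heq⟩
    ext d
    by_cases hd : d = Finsupp.single 1 1
    · rw [coeff_riccatiStep, if_pos hd, hd, h1]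
    have hd' := congr(coeff d $heq)
    rw [coeff_riccati h0, map_zero] at hd'
    rw [coeff_riccatiStep, if_neg hd, div_eq_iff (riccatiWeight_ne_zero hβpos hβ hd)]
    linarith
  · intro h
    have hf (d : Fin 2 →₀ ℕ) : coeff d f = coeff d (riccatiStep α β γ f) := by rw [h]
    have h0 : coeff 0 f = 0 := by
      simp [hf, coeff_riccatiStep, strictSqCoeff_of_degree_le_one,
        eq_comm (b := Finsupp.single _ _)]
    refine ⟨h0, by simp [hf, coeff_riccatiStep], ?_⟩
    ext d
    rw [coeff_riccati h0, map_zero]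
    by_cases hd : d = Finsupp.single 1 1
    · subst hd
      simp [riccatiWeight, strictSqCoeff_of_degree_le_one, Finsupp.single_left_inj]
    rw [hf d, coeff_riccatiStep, if_neg hd]
    field_simp [riccatiWeight_ne_zero hβpos hβ hd]
    ring

/-- **Existence and uniqueness of the bivariate series solution of the singular Riccati
equation**: for `β > 0` not an integer and any `γ ∈ ℝ` there is a unique
`f ∈ ℝ[[X,Y]]` with zero constant coefficient and `Y`-coefficient `γ` satisfying
`X ∂f/∂X + β Y ∂f/∂Y - β f + β f² + α X = 0`. -/
theorem riccati_bivariate_series (α β : ℝ) (hβpos : 0 < β) (hβ : ∀ k : ℤ, β ≠ (k : ℝ))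
    (γ : ℝ) :
    ∃! f : MvPowerSeries (Fin 2) ℝ,
      MvPowerSeries.coeff (R := ℝ) 0 f = 0 ∧
      MvPowerSeries.coeff (R := ℝ) (Finsupp.single 1 1) f = γ ∧
      eulerOp β f - MvPowerSeries.C (σ := Fin 2) (R := ℝ) β * f
        + MvPowerSeries.C (σ := Fin 2) (R := ℝ) β * f ^ 2
        + MvPowerSeries.C (σ := Fin 2) (R := ℝ) α * MvPowerSeries.X 0 = 0 :=
  (existsUnique_congr (riccati_iff_riccatiStep_eq hβpos hβ γ)).mpr <|
    WellFoundedLT.existsUnique_fixedPt_of_eqOn_Iio (riccatiStep α β γ) fun _ _ _ h ↦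
      riccatiStep_congr α β γ h
end

section
/- Let α ∈ ℝ, let β > 0 be not an integer, let γ ∈ ℝ, and let f ∈ ℝ[[X,Y]] be the unique bivariate formal power series with zero constant coefficient and Y-coefficient γ satisfying X·∂f/∂X + β·Y·∂f/∂Y − β·f + β·f² + α·X = 0. Then f is rational of degree at most one in Y: there exist univariate formal power series A_0, A_1, B_0, B_1 ∈ ℝ[[X]], with A_0 having zero constant term and B_0 having constant term 1, such that f·(B_0 + Y·B_1) = A_0 + Y·A_1 in ℝ[[X,Y]]. (This is the structural content of the paper's rational form (riccrat) of the Riccati solution, equivalently the fact behind the identity w^R_{n,m} = w^R_{n,1} for m ≥ 1.) -/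
noncomputable def embX (p : PowerSeries ℝ) : MvPowerSeries (Fin 2) ℝ :=
  fun d => if d 1 = 0 then PowerSeries.coeff (R := ℝ) (d 0) p else 0

open MvPowerSeries Finsupp

namespace MvPowerSeries

variable {σ R : Type*}

theorem eq_zero_of_coeff_mul_eq_zero [Semiring R] {f D : MvPowerSeries σ R}
    (hf : constantCoeff f = 0) (hD : ∀ d, coeff d (f * D) = 0 → coeff d D = 0) : D = 0 := by
  by_contra hne
  obtain ⟨d, hd, hdeg⟩ := exists_coeff_ne_zero_and_order (ne_zero_iff_order_finite.mp hne)
  refine hd (hD d (coeff_of_lt_order ?_))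
  calc (d.degree : ℕ∞) < 1 + D.order := by
        rw [← hdeg]; norm_cast; omega
    _ ≤ f.order + D.order := by gcongr; exact one_le_order_iff_constCoeff_eq_zero.mpr hf
    _ ≤ (f * D).order := le_order_mul

theorem coeff_single_one_mul [CommSemiring R] [DecidableEq σ] (i : σ)
    (f g : MvPowerSeries σ R) :
    coeff (single i 1) (f * g) =
      coeff 0 f * coeff (single i 1) g + coeff (single i 1) f * coeff 0 g := by
  rw [coeff_mul, Finsupp.antidiagonal_single]
  simp [Finset.Nat.antidiagonal_succ]

theorem coeff_X_mul [Semiring R] (i : σ) (f : MvPowerSeries σ R) (d : σ →₀ ℕ) :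
    coeff d (X i * f) = if d i = 0 then 0 else coeff (d - single i 1) f := by
  classical
  rw [X_def, coeff_monomial_mul, one_mul]
  by_cases h : d i = 0 <;> simp [Finsupp.single_le_iff, Nat.one_le_iff_ne_zero, h]

end MvPowerSeries

section eulerOp

variable (β : ℝ)

theorem coeff_eulerOp (f : MvPowerSeries (Fin 2) ℝ) (d : Fin 2 →₀ ℕ) :
    coeff d (eulerOp β f) = (d 0 + β * d 1) * coeff d f := rfl

theorem eulerOp_sub (f g : MvPowerSeries (Fin 2) ℝ) :
    eulerOp β (f - g) = eulerOp β f - eulerOp β g := by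
  ext d
  simp only [coeff_eulerOp, map_sub]
  ring

theorem eulerOp_C_mul (r : ℝ) (f : MvPowerSeries (Fin 2) ℝ) :
    eulerOp β (C r * f) = C r * eulerOp β f := by
  ext d
  simp only [coeff_eulerOp, coeff_C_mul]
  ring

theorem eulerOp_mul (f g : MvPowerSeries (Fin 2) ℝ) :
    eulerOp β (f * g) = eulerOp β f * g + f * eulerOp β g := by
  ext d
  simp only [coeff_eulerOp, map_add, coeff_mul, Finset.mul_sum, ← Finset.sum_add_distrib]
  refine Finset.sum_congr rfl fun p hp => ?_
  rw [Finset.HasAntidiagonal.mem_antidiagonal] at hp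
  subst hp
  simp only [Finsupp.add_apply, Nat.cast_add]
  ring

end eulerOp

noncomputable def eulerShift (s : ℝ) (p : PowerSeries ℝ) : PowerSeries ℝ :=
  PowerSeries.mk fun n => (n + s) * PowerSeries.coeff n p

noncomputable def affineInY (p q : PowerSeries ℝ) : MvPowerSeries (Fin 2) ℝ :=
  embX p + X 1 * embX q

section affineInY

variable (p q : PowerSeries ℝ)

theorem coeff_affineInY (d : Fin 2 →₀ ℕ) :
    coeff d (affineInY p q) =
      if d 1 = 0 then PowerSeries.coeff (d 0) p
      else if d 1 = 1 then PowerSeries.coeff (d 0) q else 0 := by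
  rw [affineInY, map_add, coeff_X_mul]
  simp only [embX, coeff_apply]
  split_ifs <;> simp_all; omega

theorem affineInY_sub (p' q' : PowerSeries ℝ) :
    affineInY p q - affineInY p' q' = affineInY (p - p') (q - q') := by
  ext d
  rw [map_sub, coeff_affineInY, coeff_affineInY, coeff_affineInY]
  split_ifs <;> simp

theorem C_mul_affineInY (r : ℝ) : C r * affineInY p q = affineInY (r • p) (r • q) := by
  ext d
  rw [coeff_C_mul, coeff_affineInY, coeff_affineInY]
  split_ifs <;> simp

theorem X_zero_mul_affineInY :
    X 0 * affineInY p q = affineInY (PowerSeries.X * p) (PowerSeries.X * q) := by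
  ext d
  rw [coeff_X_mul, coeff_affineInY, coeff_affineInY]
  rcases h : d 0 with _ | n
  · simp
  · simp [h]

theorem eulerOp_affineInY (β : ℝ) :
    eulerOp β (affineInY p q) = affineInY (eulerShift 0 p) (eulerShift β q) := by
  ext d
  rw [coeff_eulerOp, coeff_affineInY, coeff_affineInY]
  split_ifs <;> simp [eulerShift, *]

theorem eulerOp_eulerOp_affineInY {α β : ℝ}
    (hp : eulerShift 0 (eulerShift 0 p) = β • eulerShift 0 p - (α * β) • (PowerSeries.X * p))
    (hq : eulerShift β (eulerShift β q) = β • eulerShift β q - (α * β) • (PowerSeries.X * q)) :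
    eulerOp β (eulerOp β (affineInY p q)) =
      C β * eulerOp β (affineInY p q) - C (α * β) * (X 0 * affineInY p q) := by
  simp only [eulerOp_affineInY, C_mul_affineInY, X_zero_mul_affineInY, affineInY_sub, hp, hq]

end affineInY

noncomputable def riccatiCoeff (α β s c : ℝ) : ℕ → ℝ
  | 0 => c
  | n + 1 => -(α * β) / ((n + 1 + s) * (n + 1 + s - β)) * riccatiCoeff α β s c n

noncomputable def riccatiSeries (α β s c : ℝ) : PowerSeries ℝ :=
  PowerSeries.mk (riccatiCoeff α β s c)

theorem eulerShift_eulerShift_riccatiSeries {α β s : ℝ} (c : ℝ) (hs : s * (s - β) = 0)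
    (hden : ∀ n : ℕ, ((n : ℝ) + 1 + s) * (n + 1 + s - β) ≠ 0) :
    eulerShift s (eulerShift s (riccatiSeries α β s c)) =
      β • eulerShift s (riccatiSeries α β s c)
        - (α * β) • (PowerSeries.X * riccatiSeries α β s c) := by
  ext (_ | n)
  · simp only [eulerShift, riccatiSeries, PowerSeries.coeff_mk, map_sub, PowerSeries.coeff_smul,
      PowerSeries.coeff_zero_X_mul, smul_eq_mul, Nat.cast_zero, zero_add]
    linear_combination riccatiCoeff α β s c 0 * hs
  · have hrec : ((n : ℝ) + 1 + s) * (n + 1 + s - β) * riccatiCoeff α β s c (n + 1) =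
        -(α * β) * riccatiCoeff α β s c n := by
      rw [riccatiCoeff, ← mul_assoc, mul_div_cancel₀ _ (hden n)]
    simp only [eulerShift, riccatiSeries, PowerSeries.coeff_mk, map_sub, PowerSeries.coeff_smul,
      PowerSeries.coeff_succ_X_mul, smul_eq_mul, Nat.cast_succ]
    linear_combination hrec

theorem eulerOp_sub_C_mul_mul {α β : ℝ} {f g : MvPowerSeries (Fin 2) ℝ}
    (hf : eulerOp β f - C β * f + C β * f ^ 2 + C α * X 0 = 0)
    (hg : eulerOp β (eulerOp β g) = C β * eulerOp β g - C (α * β) * (X 0 * g)) :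
    eulerOp β (eulerOp β g - C β * (f * g)) =
      C β * ((1 - f) * (eulerOp β g - C β * (f * g))) := by
  have hf' : eulerOp β f = C β * f - C β * f ^ 2 - C α * X 0 := by linear_combination hf
  rw [eulerOp_sub, eulerOp_C_mul, eulerOp_mul, hg, hf', map_mul]
  ring

theorem cast_add_mul_cast_sub_ne_zero {β : ℝ} (hβpos : 0 < β) (hβ : ∀ n : ℕ, β ≠ n)
    {d : Fin 2 →₀ ℕ} (hd : d ≠ single 1 1) : (d 0 : ℝ) + β * d 1 - β ≠ 0 := by
  rcases h1 : d 1 with _ | _ | m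
  · simpa [sub_eq_zero] using (hβ (d 0)).symm
  · have h0 : d 0 ≠ 0 := fun h0 => hd (by ext i; fin_cases i <;> simp [h0, h1])
    simpa using h0
  · push_cast
    nlinarith [(d 0).cast_nonneg (α := ℝ), m.cast_nonneg (α := ℝ)]

theorem eq_zero_of_eulerOp_eq {β : ℝ} (hβpos : 0 < β) (hβ : ∀ n : ℕ, β ≠ n)
    {f D : MvPowerSeries (Fin 2) ℝ} (hf : constantCoeff f = 0)
    (hD : eulerOp β D = C β * ((1 - f) * D)) (hDY : coeff (single 1 1) D = 0) : D = 0 := by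
  refine eq_zero_of_coeff_mul_eq_zero hf fun d hfD => ?_
  by_cases hd : d = single 1 1
  · rwa [hd]
  have hcoeff := congrArg (coeff d) hD
  rw [coeff_eulerOp, coeff_C_mul, sub_mul, one_mul, map_sub, hfD, sub_zero] at hcoeff
  exact (mul_eq_zero.mp (by linear_combination hcoeff)).resolve_left
    (cast_add_mul_cast_sub_ne_zero hβpos hβ hd)

/-- **Rationality in `Y` of the bivariate Riccati solution** (the structure behind the
paper's rational form (riccrat) and the identity `w^R_{n,m} = w^R_{n,1}`): the unique
bivariate series solution `f` satisfies `f·(B₀ + Y·B₁) = A₀ + Y·A₁` for univariate series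
`A₀, A₁, B₀, B₁` with `A₀(0) = 0` and `B₀(0) = 1`. -/
theorem riccati_bivariate_rational (α β : ℝ) (hβpos : 0 < β) (hβ : ∀ k : ℤ, β ≠ (k : ℝ))
    (γ : ℝ) (f : MvPowerSeries (Fin 2) ℝ)
    (hf0 : MvPowerSeries.coeff (R := ℝ) 0 f = 0)
    (hfγ : MvPowerSeries.coeff (R := ℝ) (Finsupp.single 1 1) f = γ)
    (hfeq : eulerOp β f - MvPowerSeries.C (σ := Fin 2) (R := ℝ) β * f
        + MvPowerSeries.C (σ := Fin 2) (R := ℝ) β * f ^ 2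
        + MvPowerSeries.C (σ := Fin 2) (R := ℝ) α * MvPowerSeries.X 0 = 0) :
    ∃ A₀ A₁ B₀ B₁ : PowerSeries ℝ,
      PowerSeries.constantCoeff (R := ℝ) A₀ = 0 ∧
      PowerSeries.constantCoeff (R := ℝ) B₀ = 1 ∧
      f * (embX B₀ + MvPowerSeries.X 1 * embX B₁) =
        embX A₀ + MvPowerSeries.X 1 * embX A₁ := by
  have hβnat (n : ℕ) : β ≠ n := mod_cast hβ n
  set B₀ := riccatiSeries α β 0 1
  set B₁ := riccatiSeries α β β γ
  set g := affineInY B₀ B₁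
  have hg : eulerOp β (eulerOp β g) = C β * eulerOp β g - C (α * β) * (X 0 * g) :=
    eulerOp_eulerOp_affineInY B₀ B₁
      (eulerShift_eulerShift_riccatiSeries 1 (by ring) fun n => by
        rw [add_zero]
        exact mul_ne_zero (by positivity) (sub_ne_zero.mpr (mod_cast (hβnat (n + 1)).symm)))
      (eulerShift_eulerShift_riccatiSeries γ (by ring) fun n => by
        rw [add_sub_cancel_right]
        positivity)
  have hDY : coeff (single 1 1) (eulerOp β g - C β * (f * g)) = 0 := by
    simp [coeff_eulerOp, coeff_single_one_mul, hf0, hfγ, g, coeff_affineInY, B₀, B₁,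
      riccatiSeries, riccatiCoeff]
  have hD : eulerOp β g = C β * (f * g) :=
    sub_eq_zero.mp (eq_zero_of_eulerOp_eq hβpos hβnat hf0 (eulerOp_sub_C_mul_mul hfeq hg) hDY)
  have hfg : f * g = C β⁻¹ * eulerOp β g := by
    rw [hD, ← mul_assoc, ← map_mul, inv_mul_cancel₀ hβpos.ne', map_one, one_mul]
  rw [eulerOp_affineInY, C_mul_affineInY] at hfg
  exact ⟨_, _, B₀, B₁, by simp [eulerShift], by simp [B₀, riccatiSeries, riccatiCoeff], hfg⟩
end

section
/- Let α > 0 and let β > 0 be not an integer. For ν ∈ ℝ define, for z > 0, the Bessel function of the first kind by its series J_ν(z) = Σ_{k=0}^∞ (−1)^k (z/2)^{2k+ν}/(k!·Γ(k+ν+1)). Let λ, μ ∈ ℝ (not both zero) and let I ⊆ (0, ∞) be an open interval on which λ·J_β(2√(αβx)) + μ·J_{−β}(2√(αβx)) ≠ 0. Then the function w(x) := (√(αβx)/β) · ( λ·J_{β−1}(2√(αβx)) − μ·J_{1−β}(2√(αβx)) ) / ( λ·J_β(2√(αβx)) + μ·J_{−β}(2√(αβx)) ) satisfies the Riccati equation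 x·w′(x) − β·w(x) + β·w(x)² + α·x = 0 for all x ∈ I. (Since for non-integer β the Bessel function Y_ν is a linear combination of J_ν and J_{−ν}, this is the paper's closed-form Bessel-ratio solution (riccati_soln) of the singular Riccati equation.) -/
open Real

/-- The Bessel function of the first kind, defined by its series
`J_ν(z) = ∑_k (-1)^k (z/2)^(2k+ν) / (k! Γ(k+ν+1))` (here `(z/2)^(2k+ν)` is the real
power `Real.rpow` and `Γ` is the Gamma function). -/
noncomputable def besselJ (ν z : ℝ) : ℝ :=
  ∑' k : ℕ, (-1 : ℝ) ^ k * (z / 2) ^ (2 * (k : ℝ) + ν) /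
    ((k.factorial : ℝ) * Real.Gamma ((k : ℝ) + ν + 1))

/-! Write `J_ν(z) = (z/2)^ν S_ν((z/2)²)` with the entire power series
`S_ν(t) = ∑ (-1)^k t^k / (k! Γ(k+ν+1))`. Termwise differentiation gives `S_ν' = -S_{ν+1}`, and
`(k+ν)/Γ(k+ν+1) = 1/Γ(k+ν)` gives `S_{ν-1}(t) + t S_{ν+1}(t) = ν S_ν(t)`; together they are the
classical relations `J_ν' = (ν/z) J_ν - J_{ν+1} = J_{ν-1} - (ν/z) J_ν`. Hence
`P = λ J_{β-1} - μ J_{1-β}` and `Q = λ J_β + μ J_{-β}` satisfy `P' = ((β-1)/z) P - Q` and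
`Q' = P - (β/z) Q`, so `R = z P / Q` solves `z R' = 2βR - R² - z²`. Substituting `z = 2√(αβx)`
(so that `x dz/dx = z/2` and `z² = 4αβx`) and `w = R/(2β)` gives the Riccati equation. -/

open Filter Asymptotics Topology

section PowerSeries

variable {a : ℕ → ℝ}

lemma summable_succ_mul_abs_mul_pow (ha : (fun k => a (k + 1)) =o[atTop] a)
    {r : ℝ} (hr : 0 ≤ r) : Summable fun k : ℕ => ((k : ℝ) + 1) * |a k| * r ^ k := by
  refine summable_of_ratio_norm_eventually_le (r := 1 / 2) (by norm_num) ?_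
  filter_upwards [ha.def (c := 1 / (4 * (r + 1))) (by positivity)] with k hk
  rw [norm_eq_abs, norm_eq_abs] at hk
  have hterm : ∀ n : ℕ, 0 ≤ ((n : ℝ) + 1) * |a n| * r ^ n := fun n => by positivity
  rw [norm_of_nonneg (hterm _), norm_of_nonneg (hterm _)]
  have hr' : r * (1 / (4 * (r + 1))) ≤ 1 / 4 := by
    rw [mul_one_div, div_le_iff₀ (by positivity)]; linarith
  calc ((k + 1 : ℕ) + 1 : ℝ) * |a (k + 1)| * r ^ (k + 1)
      = ((k : ℝ) + 2) * r ^ k * (r * |a (k + 1)|) := by push_cast; ring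
    _ ≤ ((k : ℝ) + 2) * r ^ k * (r * (1 / (4 * (r + 1))) * |a k|) := by
        rw [mul_assoc r]; gcongr
    _ ≤ ((k : ℝ) + 2) * r ^ k * (1 / 4 * |a k|) := by gcongr
    _ ≤ 1 / 2 * (((k : ℝ) + 1) * |a k| * r ^ k) := by
        nlinarith [mul_nonneg (pow_nonneg hr k) (abs_nonneg (a k))]

lemma summable_mul_pow (ha : (fun k => a (k + 1)) =o[atTop] a) (t : ℝ) :
    Summable fun k : ℕ => a k * t ^ k := by
  refine .of_norm_bounded (summable_succ_mul_abs_mul_pow ha (abs_nonneg t)) fun k => ?_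
  rw [norm_mul, norm_pow, norm_eq_abs, norm_eq_abs]
  nlinarith [mul_nonneg (abs_nonneg (a k)) (pow_nonneg (abs_nonneg t) k)]

lemma hasDerivAt_tsum_mul_pow_s12 (ha : (fun k => a (k + 1)) =o[atTop] a) (t : ℝ) :
    HasDerivAt (fun y => ∑' k, a k * y ^ k) (∑' k : ℕ, ((k : ℝ) + 1) * a (k + 1) * t ^ k) t := by
  set R := |t| + 1
  have hR : 1 ≤ R := by simp [R]
  have ht : t ∈ Metric.ball (0 : ℝ) R := by simp [R]
  have hbound : ∀ (k : ℕ), ∀ y ∈ Metric.ball (0 : ℝ) R,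
      ‖a k * (k * y ^ (k - 1))‖ ≤ ((k : ℝ) + 1) * |a k| * R ^ k := by
    intro k y hy
    have hy : |y| ≤ R := by simpa using (mem_ball_zero_iff.1 hy).le
    have hpow : |y| ^ (k - 1) ≤ R ^ k :=
      (pow_le_pow_left₀ (abs_nonneg y) hy _).trans (pow_le_pow_right₀ hR (Nat.sub_le k 1))
    simp only [norm_mul, norm_pow, norm_eq_abs, Nat.abs_cast]
    nlinarith [mul_le_mul_of_nonneg_left hpow (mul_nonneg (abs_nonneg (a k)) (Nat.cast_nonneg k)),
      mul_nonneg (abs_nonneg (a k)) (pow_nonneg (zero_le_one.trans hR) k)]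
  have hsum := summable_succ_mul_abs_mul_pow ha (zero_le_one.trans hR)
  have hder := hasDerivAt_tsum_of_isPreconnected hsum Metric.isOpen_ball
    (convex_ball (0 : ℝ) R).isPreconnected (fun k y _ => (hasDerivAt_pow k y).const_mul (a k))
    hbound ht (summable_mul_pow ha t) ht
  rw [(Summable.of_norm_bounded hsum fun k => hbound k t ht).tsum_eq_zero_add] at hder
  simpa [mul_comm, mul_left_comm, mul_assoc] using hder

end PowerSeries

-- Also true at the poles, where `Gamma` takes the junk value `0`.
lemma Real.one_div_Gamma_eq_self_mul_one_div_Gamma_add_one (s : ℝ) :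
    (Gamma s)⁻¹ = s * (Gamma (s + 1))⁻¹ := by
  rcases ne_or_eq s 0 with hs | rfl
  · rw [Gamma_add_one hs, mul_inv, mul_inv_cancel_left₀ hs]
  · rw [zero_add, Gamma_zero, inv_zero, zero_mul]

noncomputable def besselCoeff (ν : ℝ) (k : ℕ) : ℝ :=
  (-1) ^ k / (k.factorial * Gamma (k + ν + 1))

noncomputable def besselSeries (ν t : ℝ) : ℝ :=
  ∑' k : ℕ, besselCoeff ν k * t ^ k

lemma succ_mul_besselCoeff_succ (ν : ℝ) (k : ℕ) :
    ((k : ℝ) + 1) * besselCoeff ν (k + 1) = -besselCoeff (ν + 1) k := by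
  simp only [besselCoeff, Nat.factorial_succ, div_eq_mul_inv, mul_inv]
  push_cast
  rw [show (k : ℝ) + 1 + ν + 1 = k + (ν + 1) + 1 by ring]
  field_simp
  ring

lemma add_mul_besselCoeff (ν : ℝ) (k : ℕ) :
    ((k : ℝ) + ν) * besselCoeff ν k = besselCoeff (ν - 1) k := by
  simp only [besselCoeff, div_eq_mul_inv, mul_inv]
  rw [show (k : ℝ) + (ν - 1) + 1 = k + ν by ring,
    one_div_Gamma_eq_self_mul_one_div_Gamma_add_one (k + ν)]
  ring

lemma besselCoeff_succ_mul (ν : ℝ) (k : ℕ) :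
    ((k : ℝ) + 1) * ((k : ℝ) + ν + 1) * besselCoeff ν (k + 1) = -besselCoeff ν k := by
  have h := add_mul_besselCoeff (ν + 1) k
  rw [add_sub_cancel_right] at h
  linear_combination ((k : ℝ) + ν + 1) * succ_mul_besselCoeff_succ ν k - h

lemma isLittleO_besselCoeff_succ (ν : ℝ) :
    (fun k => besselCoeff ν (k + 1)) =o[atTop] besselCoeff ν := by
  refine .of_bound fun ε hε => ?_
  filter_upwards [tendsto_natCast_atTop_atTop.eventually_ge_atTop (1 / ε - ν)] with k hk
  have hfac : 1 / ε ≤ ((k : ℝ) + 1) * ((k : ℝ) + ν + 1) := by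
    nlinarith [one_div_pos.2 hε]
  have hpos : 0 < ((k : ℝ) + 1) * ((k : ℝ) + ν + 1) := (one_div_pos.2 hε).trans_le hfac
  rw [norm_eq_abs, norm_eq_abs, ← abs_neg (besselCoeff ν k), ← besselCoeff_succ_mul, abs_mul,
    abs_of_pos hpos]
  calc |besselCoeff ν (k + 1)| = ε * (1 / ε) * |besselCoeff ν (k + 1)| := by field_simp
    _ ≤ ε * (((k : ℝ) + 1) * ((k : ℝ) + ν + 1) * |besselCoeff ν (k + 1)|) := by
      rw [mul_assoc]; gcongr

lemma hasDerivAt_besselSeries (ν t : ℝ) :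
    HasDerivAt (besselSeries ν) (-besselSeries (ν + 1) t) t := by
  have h := hasDerivAt_tsum_mul_pow_s12 (isLittleO_besselCoeff_succ ν) t
  simp only [succ_mul_besselCoeff_succ, neg_mul, tsum_neg] at h
  exact h

lemma besselSeries_sub_one_add_mul (ν t : ℝ) :
    besselSeries (ν - 1) t + t * besselSeries (ν + 1) t = ν * besselSeries ν t := by
  have hterm : ∀ k : ℕ, besselCoeff (ν - 1) k * t ^ k - ν * (besselCoeff ν k * t ^ k)
      = (k : ℝ) * besselCoeff ν k * t ^ k := fun k => by
    rw [← add_mul_besselCoeff]; ring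
  have hs : Summable fun k : ℕ => (k : ℝ) * besselCoeff ν k * t ^ k := by
    simpa only [hterm] using (summable_mul_pow (isLittleO_besselCoeff_succ (ν - 1)) t).sub
      ((summable_mul_pow (isLittleO_besselCoeff_succ ν) t).mul_left ν)
  have hdiff : besselSeries (ν - 1) t - ν * besselSeries ν t
      = ∑' k : ℕ, (k : ℝ) * besselCoeff ν k * t ^ k := by
    rw [besselSeries, besselSeries, ← tsum_mul_left, ← Summable.tsum_sub
      (summable_mul_pow (isLittleO_besselCoeff_succ (ν - 1)) t)
      ((summable_mul_pow (isLittleO_besselCoeff_succ ν) t).mul_left ν)]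
    exact tsum_congr hterm
  have hshift : ∑' k : ℕ, (k : ℝ) * besselCoeff ν k * t ^ k = -(t * besselSeries (ν + 1) t) := by
    rw [hs.tsum_eq_zero_add, besselSeries, ← tsum_mul_left, ← tsum_neg]
    simp only [Nat.cast_zero, zero_mul, zero_add, Nat.cast_succ]
    refine tsum_congr fun k => ?_
    rw [pow_succ]
    linear_combination t * t ^ k * succ_mul_besselCoeff_succ ν k
  linarith

lemma besselJ_eq_rpow_mul_besselSeries (ν : ℝ) {z : ℝ} (hz : 0 < z) :
    besselJ ν z = (z / 2) ^ ν * besselSeries ν ((z / 2) ^ 2) := by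
  rw [besselJ, besselSeries, ← tsum_mul_left]
  refine tsum_congr fun k => ?_
  rw [rpow_add (by positivity), show 2 * (k : ℝ) = ((2 * k : ℕ) : ℝ) by push_cast; ring,
    rpow_natCast, pow_mul, besselCoeff]
  ring

lemma hasDerivAt_besselJ_add_one (ν : ℝ) {z : ℝ} (hz : 0 < z) :
    HasDerivAt (besselJ ν) (ν / z * besselJ ν z - besselJ (ν + 1) z) z := by
  have hz2 : 0 < z / 2 := by positivity
  have hhalf : HasDerivAt (fun y : ℝ => y / 2) (1 / 2) z := (hasDerivAt_id z).div_const 2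
  have hpow := hhalf.rpow_const (p := ν) (Or.inl hz2.ne')
  have hseries := (hasDerivAt_besselSeries ν ((z / 2) ^ 2)).comp z (hhalf.fun_pow 2)
  have heq : besselJ ν =ᶠ[𝓝 z] fun y => (y / 2) ^ ν * besselSeries ν ((y / 2) ^ 2) :=
    eventually_of_mem (Ioi_mem_nhds hz) fun y hy => besselJ_eq_rpow_mul_besselSeries ν hy
  refine ((hpow.mul hseries).congr_of_eventuallyEq heq).congr_deriv ?_
  rw [besselJ_eq_rpow_mul_besselSeries ν hz, besselJ_eq_rpow_mul_besselSeries (ν + 1) hz,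
    rpow_sub_one hz2.ne', rpow_add_one hz2.ne', Function.comp_apply]
  generalize besselSeries ν ((z / 2) ^ 2) = S₀
  generalize besselSeries (ν + 1) ((z / 2) ^ 2) = S₁
  field_simp
  ring

lemma besselJ_sub_one_add_besselJ_add_one (ν : ℝ) {z : ℝ} (hz : 0 < z) :
    besselJ (ν - 1) z + besselJ (ν + 1) z = 2 * ν / z * besselJ ν z := by
  have hz2 : 0 < z / 2 := by positivity
  rw [besselJ_eq_rpow_mul_besselSeries _ hz, besselJ_eq_rpow_mul_besselSeries _ hz,
    besselJ_eq_rpow_mul_besselSeries _ hz, rpow_sub_one hz2.ne', rpow_add_one hz2.ne']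
  have h := besselSeries_sub_one_add_mul ν ((z / 2) ^ 2)
  generalize besselSeries (ν - 1) ((z / 2) ^ 2) = Sm at h ⊢
  generalize besselSeries ν ((z / 2) ^ 2) = S₀ at h ⊢
  generalize besselSeries (ν + 1) ((z / 2) ^ 2) = S₁ at h ⊢
  field_simp
  linear_combination 4 * h

lemma hasDerivAt_besselJ_sub_one (ν : ℝ) {z : ℝ} (hz : 0 < z) :
    HasDerivAt (besselJ ν) (besselJ (ν - 1) z - ν / z * besselJ ν z) z := by
  refine (hasDerivAt_besselJ_add_one ν hz).congr_deriv ?_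
  linear_combination -besselJ_sub_one_add_besselJ_add_one ν hz

lemma hasDerivAt_mul_div_of_bessel_system {P Q : ℝ → ℝ} {β z : ℝ}
    (hP : HasDerivAt P ((β - 1) / z * P z - Q z) z) (hQ : HasDerivAt Q (P z - β / z * Q z) z)
    (hz : z ≠ 0) (hQz : Q z ≠ 0) :
    HasDerivAt (fun y => y * P y / Q y)
      ((2 * β * (z * P z / Q z) - (z * P z / Q z) ^ 2 - z ^ 2) / z) z := by
  refine (((hasDerivAt_id' z).fun_mul hP).div hQ hQz).congr_deriv ?_
  field_simp
  ring

noncomputable def besselNum (β lam mu z : ℝ) : ℝ :=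
  lam * besselJ (β - 1) z - mu * besselJ (1 - β) z

noncomputable def besselDen (β lam mu z : ℝ) : ℝ :=
  lam * besselJ β z + mu * besselJ (-β) z

lemma hasDerivAt_besselNum (β lam mu : ℝ) {z : ℝ} (hz : 0 < z) :
    HasDerivAt (besselNum β lam mu)
      ((β - 1) / z * besselNum β lam mu z - besselDen β lam mu z) z := by
  have h₁ := hasDerivAt_besselJ_add_one (β - 1) hz
  have h₂ := hasDerivAt_besselJ_sub_one (1 - β) hz
  rw [sub_add_cancel] at h₁
  rw [sub_sub_cancel_left] at h₂
  refine ((h₁.const_mul lam).sub (h₂.const_mul mu)).congr_deriv ?_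
  simp only [besselNum, besselDen]
  ring

lemma hasDerivAt_besselDen (β lam mu : ℝ) {z : ℝ} (hz : 0 < z) :
    HasDerivAt (besselDen β lam mu)
      (besselNum β lam mu z - β / z * besselDen β lam mu z) z := by
  have h₁ := hasDerivAt_besselJ_sub_one β hz
  have h₂ := hasDerivAt_besselJ_add_one (-β) hz
  rw [neg_add_eq_sub] at h₂
  refine ((h₁.const_mul lam).add (h₂.const_mul mu)).congr_deriv ?_
  simp only [besselNum, besselDen]
  ring

lemma hasDerivAt_two_mul_sqrt_mul {c x : ℝ} (hcx : 0 < c * x) :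
    HasDerivAt (fun y => 2 * √(c * y)) (√(c * x) / x) x := by
  have hx : x ≠ 0 := by rintro rfl; simp at hcx
  refine ((((hasDerivAt_id' x).const_mul c).sqrt hcx.ne').const_mul 2).congr_deriv ?_
  have hs : 0 < √(c * x) := sqrt_pos.2 hcx
  field_simp
  exact (sq_sqrt hcx.le).symm

theorem riccati_bessel_solution_general (α β : ℝ) (hα : 0 < α) (hβpos : 0 < β)
    (lam mu : ℝ) (I : Set ℝ) (hIpos : I ⊆ Set.Ioi (0 : ℝ))
    (hden : ∀ x ∈ I,
      lam * besselJ β (2 * Real.sqrt (α * β * x))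
        + mu * besselJ (-β) (2 * Real.sqrt (α * β * x)) ≠ 0)
    (w : ℝ → ℝ)
    (hw : ∀ x, w x =
      (Real.sqrt (α * β * x) / β) *
        (lam * besselJ (β - 1) (2 * Real.sqrt (α * β * x))
          - mu * besselJ (1 - β) (2 * Real.sqrt (α * β * x))) /
        (lam * besselJ β (2 * Real.sqrt (α * β * x))
          + mu * besselJ (-β) (2 * Real.sqrt (α * β * x)))) :
    ∀ x ∈ I, x * deriv w x - β * w x + β * (w x) ^ 2 + α * x = 0 := by
  intro x hx
  have hx0 : 0 < x := hIpos hx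
  have hax : 0 < α * β * x := by positivity
  have hz : 0 < 2 * √(α * β * x) := by positivity
  have hD : besselDen β lam mu (2 * √(α * β * x)) ≠ 0 := hden x hx
  have hR := hasDerivAt_mul_div_of_bessel_system (hasDerivAt_besselNum β lam mu hz)
    (hasDerivAt_besselDen β lam mu hz) hz.ne' hD
  have hw_eq : w = fun x => 2 * √(α * β * x) * besselNum β lam mu (2 * √(α * β * x))
      / besselDen β lam mu (2 * √(α * β * x)) / (2 * β) := by
    funext y
    simp only [hw y, besselNum, besselDen]
    field_simp
  have hw' := ((hR.comp x (hasDerivAt_two_mul_sqrt_mul hax)).div_const (2 * β))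
    |>.congr_of_eventuallyEq (.of_eq hw_eq)
  rw [hw'.deriv, hw_eq]
  beta_reduce
  have hsq : √(α * β * x) ^ 2 = α * β * x := sq_sqrt hax.le
  generalize besselNum β lam mu (2 * √(α * β * x)) = N
  generalize besselDen β lam mu (2 * √(α * β * x)) = D at hD
  generalize √(α * β * x) = s at hsq
  field_simp
  linear_combination -D ^ 2 * hsq

/-- **The closed-form Bessel-ratio solution of the singular Riccati equation** (the
paper's (riccati_soln), with `Y_ν` rewritten as a combination of `J_ν` and `J_{-ν}`):
on any open interval `I ⊆ (0,∞)` where the denominator does not vanish,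
`w(x) = (√(αβx)/β)·(λ J_{β-1}(2√(αβx)) - μ J_{1-β}(2√(αβx)))
        /(λ J_β(2√(αβx)) + μ J_{-β}(2√(αβx)))`
satisfies `x w' - β w + β w² + α x = 0`. -/
theorem riccati_bessel_solution (α β : ℝ) (hα : 0 < α) (hβpos : 0 < β)
    (hβ : ∀ k : ℤ, β ≠ (k : ℝ))
    (lam mu : ℝ) (hlm : ¬(lam = 0 ∧ mu = 0))
    (I : Set ℝ) (hIopen : IsOpen I) (hIinterval : I.OrdConnected)
    (hIpos : I ⊆ Set.Ioi (0 : ℝ))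
    (hden : ∀ x ∈ I,
      lam * besselJ β (2 * Real.sqrt (α * β * x))
        + mu * besselJ (-β) (2 * Real.sqrt (α * β * x)) ≠ 0)
    (w : ℝ → ℝ)
    (hw : ∀ x, w x =
      (Real.sqrt (α * β * x) / β) *
        (lam * besselJ (β - 1) (2 * Real.sqrt (α * β * x))
          - mu * besselJ (1 - β) (2 * Real.sqrt (α * β * x))) /
        (lam * besselJ β (2 * Real.sqrt (α * β * x))
          + mu * besselJ (-β) (2 * Real.sqrt (α * β * x)))) :
    ∀ x ∈ I, x * deriv w x - β * w x + β * (w x) ^ 2 + α * x = 0 :=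
  riccati_bessel_solution_general α β hα hβpos lam mu I hIpos hden w hw
end
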